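/- arXiv:2201.13059 — 9 statements merged into one kernel-verified Lean document; each statement's English description precedes it below -/
import Mathlib

section
/- Let X, Y be Banach spaces, (T_k) a sequence of linear operators from X to Y, and I a tall ideal on ℕ. Then ∑_k T_k x_k converges in the norm of Y for every sequence (x_k) ∈ c₀₀(X, I) if and only if the set {k ∈ ℕ : T_k ≠ 0} is finite. -/
/-!
If infinitely many `T k` are nonzero, tallness of `I` yields an infinite `S ∈ I` on which they
are all nonzero. Choosing `x k` with `‖T k (x k)‖ = 1` for `k ∈ S` and `x k = 0` otherwise gives
a sequence supported in `S` whose series has terms not tending to zero, so it diverges.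
Conversely, if only finitely many `T k` are nonzero, every series `∑ T k (x k)` is a finite sum.
-/

open Filter Topology

theorem tendsto_nhds_zero_of_tendsto_sum_range {G : Type*} [AddCommGroup G] [TopologicalSpace G]
    [IsTopologicalAddGroup G] {f : ℕ → G} {a : G}
    (h : Tendsto (fun n ↦ ∑ k ∈ Finset.range n, f k) atTop (𝓝 a)) :
    Tendsto f atTop (𝓝 0) := by
  have hdiff := (h.comp (tendsto_add_atTop_nat 1)).sub h
  simpa only [Function.comp_def, Finset.sum_range_succ, add_sub_cancel_left, sub_self] using hdiff

theorem LinearMap.exists_norm_apply_eq_one {𝕜 X Y : Type*} [RCLike 𝕜] [AddCommGroup X]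
    [Module 𝕜 X] [NormedAddCommGroup Y] [NormedSpace 𝕜 Y] {T : X →ₗ[𝕜] Y} (hT : T ≠ 0) :
    ∃ v, ‖T v‖ = 1 := by
  obtain ⟨v, hv⟩ := DFunLike.ne_iff.mp hT
  refine ⟨((‖T v‖⁻¹ : ℝ) : 𝕜) • v, ?_⟩
  rw [map_smul, norm_smul, RCLike.norm_ofReal, abs_inv, abs_norm,
    inv_mul_cancel₀ (norm_ne_zero_iff.mpr hv)]

theorem exists_support_subset_not_tendsto_sum_range {𝕜 X Y : Type*} [RCLike 𝕜] [AddCommGroup X]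
    [Module 𝕜 X] [NormedAddCommGroup Y] [NormedSpace 𝕜 Y] {T : ℕ → X →ₗ[𝕜] Y} {S : Set ℕ}
    (hS : S.Infinite) (hT : ∀ k ∈ S, T k ≠ 0) :
    ∃ x : ℕ → X, Function.support x ⊆ S ∧
      ∀ y, ¬Tendsto (fun m ↦ ∑ k ∈ Finset.range m, T k (x k)) atTop (𝓝 y) := by
  choose! v hv using fun k hk ↦ LinearMap.exists_norm_apply_eq_one (hT k hk)
  refine ⟨S.indicator v, Set.support_indicator_subset, fun y hy ↦ ?_⟩
  have hsmall : ∀ᶠ k in atTop, ‖T k (S.indicator v k)‖ < 1 :=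
    (tendsto_nhds_zero_of_tendsto_sum_range hy).norm.eventually
      (eventually_lt_nhds (by simp only [norm_zero, zero_lt_one]))
  have hone : ∃ᶠ k in atTop, ‖T k (S.indicator v k)‖ = 1 :=
    (Nat.frequently_atTop_iff_infinite.mpr hS).mono fun k hk ↦ by
      rw [Set.indicator_of_mem hk, hv k hk]
  obtain ⟨k, heq, hlt⟩ := (hone.and_eventually hsmall).exists
  exact hlt.ne heq

theorem stmt2_general {X Y : Type*} [NormedAddCommGroup X] [NormedSpace ℝ X]
    [NormedAddCommGroup Y] [NormedSpace ℝ Y]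
    (T : ℕ → X →ₗ[ℝ] Y) (I : Set (Set ℕ))
    (hI_sub : ∀ S T : Set ℕ, S ∈ I → T ⊆ S → T ∈ I)
    (hI_tall : ∀ S : Set ℕ, S.Infinite → ∃ T : Set ℕ, T ⊆ S ∧ T.Infinite ∧ T ∈ I) :
    (∀ x : ℕ → X, {n | x n ≠ 0} ∈ I → ∃ y : Y,
        Tendsto (fun m => ∑ k ∈ Finset.range m, T k (x k)) atTop (nhds y)) ↔
      {k | T k ≠ 0}.Finite := by
  constructor
  · intro hconv
    by_contra hinf
    obtain ⟨S, hST, hS, hSI⟩ := hI_tall _ hinf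
    obtain ⟨x, hxS, hdiv⟩ := exists_support_subset_not_tendsto_sum_range hS hST
    obtain ⟨y, hy⟩ := hconv x (hI_sub S _ hSI hxS)
    exact hdiv y hy
  · intro hfin x _
    have hsupp : Function.HasFiniteSupport fun k ↦ T k (x k) :=
      hfin.subset fun k hk hTk ↦ hk (by simp only [hTk, LinearMap.zero_apply])
    exact ⟨_, (summable_of_hasFiniteSupport hsupp).hasSum.tendsto_sum_nat⟩

/-- For a tall ideal `I` on `ℕ`, the series `∑ k, T k (x k)` converges in the norm of `Y`
for every sequence `x` whose support belongs to `I` if and only if only finitely many of the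
operators `T k` are nonzero. -/
theorem stmt2 {X Y : Type*} [NormedAddCommGroup X] [NormedSpace ℝ X] [CompleteSpace X]
    [NormedAddCommGroup Y] [NormedSpace ℝ Y] [CompleteSpace Y]
    (T : ℕ → X →ₗ[ℝ] Y) (I : Set (Set ℕ))
    (hI_sub : ∀ S T : Set ℕ, S ∈ I → T ⊆ S → T ∈ I)
    (hI_union : ∀ S T : Set ℕ, S ∈ I → T ∈ I → S ∪ T ∈ I)
    (hI_fin : ∀ S : Set ℕ, S.Finite → S ∈ I)
    (hI_proper : Set.univ ∉ I)
    (hI_tall : ∀ S : Set ℕ, S.Infinite → ∃ T : Set ℕ, T ⊆ S ∧ T.Infinite ∧ T ∈ I) :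
    (∀ x : ℕ → X, {n | x n ≠ 0} ∈ I → ∃ y : Y,
        Tendsto (fun m => ∑ k ∈ Finset.range m, T k (x k)) atTop (nhds y)) ↔
      {k | T k ≠ 0}.Finite :=
  stmt2_general T I hI_sub hI_tall
end

section
/- Let X be a finite-dimensional normed space, Y a Banach space, J an ideal on ℕ, and (T_k) a sequence of bounded linear operators from X to Y such that for every x ∈ X, the sequence (‖T_k x‖) J-converges to 0. Then the sequence of operator norms (‖T_k‖) J-converges to 0. -/
/-!
An ideal `J` is the dual of the filter `{s | sᶜ ∈ J}`, and `J`-convergence is convergence along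
that filter. Along any filter, pointwise convergence of operators on a finite-dimensional space
implies norm convergence: with a basis `b`, `‖T‖ ≤ C * maxᵢ ‖T (b i)‖` for a constant `C`
depending only on `b`.
-/

open Filter Topology

section IdealFilter

variable {α : Type*} (J : Set (Set α)) (hJ_empty : ∅ ∈ J)
  (hJ_sub : ∀ S T : Set α, S ∈ J → T ⊆ S → T ∈ J)
  (hJ_union : ∀ S T : Set α, S ∈ J → T ∈ J → S ∪ T ∈ J)

def idealFilter : Filter α :=
  comk (· ∈ J) hJ_empty (fun S hS T hTS => hJ_sub S T hS hTS)
    (fun S hS T hT => hJ_union S T hS hT)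

theorem tendsto_idealFilter_nhds_zero_iff {E : Type*} [SeminormedAddGroup E] {u : α → E} :
    Tendsto u (idealFilter J hJ_empty hJ_sub hJ_union) (𝓝 0) ↔
      ∀ ε : ℝ, 0 < ε → {k | ε ≤ ‖u k‖} ∈ J := by
  simp [Metric.tendsto_nhds, Filter.Eventually, idealFilter, Set.compl_ofPred]

end IdealFilter

theorem ContinuousLinearMap.tendsto_of_tendsto_apply_of_finiteDimensional
    {𝕜 E F ι : Type*} [NontriviallyNormedField 𝕜] [CompleteSpace 𝕜]
    [NormedAddCommGroup E] [NormedSpace 𝕜 E] [FiniteDimensional 𝕜 E]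
    [NormedAddCommGroup F] [NormedSpace 𝕜 F]
    {l : Filter ι} {T : ι → E →L[𝕜] F} {T₀ : E →L[𝕜] F}
    (h : ∀ x, Tendsto (fun k => T k x) l (𝓝 (T₀ x))) :
    Tendsto T l (𝓝 T₀) := by
  let b := Module.finBasis 𝕜 E
  obtain ⟨C, -, hC⟩ := b.exists_opNorm_le (F := F)
  have on_basis : Tendsto (fun k i => (T k - T₀) (b i)) l (𝓝 0) :=
    tendsto_pi_nhds.2 fun i => by simpa using tendsto_sub_nhds_zero_iff.2 (h (b i))
  rw [← tendsto_sub_nhds_zero_iff]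
  refine squeeze_zero_norm (fun k => hC (norm_nonneg _) (norm_le_pi_norm _)) ?_
  simpa using on_basis.norm.const_mul C

theorem stmt3_general {X Y : Type*} [NormedAddCommGroup X] [NormedSpace ℝ X] [FiniteDimensional ℝ X]
    [NormedAddCommGroup Y] [NormedSpace ℝ Y]
    (J : Set (Set ℕ))
    (hJ_sub : ∀ S T : Set ℕ, S ∈ J → T ⊆ S → T ∈ J)
    (hJ_union : ∀ S T : Set ℕ, S ∈ J → T ∈ J → S ∪ T ∈ J)
    (hJ_fin : ∀ S : Set ℕ, S.Finite → S ∈ J)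
    (T : ℕ → X →L[ℝ] Y)
    (h : ∀ x : X, ∀ ε : ℝ, 0 < ε → {k | ε ≤ ‖T k x‖} ∈ J) :
    ∀ ε : ℝ, 0 < ε → {k | ε ≤ ‖T k‖} ∈ J := by
  have hJ_empty : ∅ ∈ J := hJ_fin ∅ Set.finite_empty
  have hT : Tendsto T (idealFilter J hJ_empty hJ_sub hJ_union) (𝓝 0) :=
    ContinuousLinearMap.tendsto_of_tendsto_apply_of_finiteDimensional fun x => by
      simpa using (tendsto_idealFilter_nhds_zero_iff J hJ_empty hJ_sub hJ_union).2 (h x)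
  exact (tendsto_idealFilter_nhds_zero_iff J hJ_empty hJ_sub hJ_union).1 hT

/-- If `X` is finite dimensional and `(‖T k x‖)` `J`-converges to `0` for every `x ∈ X`,
then the operator norms `(‖T k‖)` `J`-converge to `0`. -/
theorem stmt3 {X Y : Type*} [NormedAddCommGroup X] [NormedSpace ℝ X] [FiniteDimensional ℝ X]
    [NormedAddCommGroup Y] [NormedSpace ℝ Y]
    (J : Set (Set ℕ))
    (hJ_sub : ∀ S T : Set ℕ, S ∈ J → T ⊆ S → T ∈ J)
    (hJ_union : ∀ S T : Set ℕ, S ∈ J → T ∈ J → S ∪ T ∈ J)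
    (hJ_fin : ∀ S : Set ℕ, S.Finite → S ∈ J)
    (hJ_proper : Set.univ ∉ J)
    (T : ℕ → X →L[ℝ] Y)
    (h : ∀ x : X, ∀ ε : ℝ, 0 < ε → {k | ε ≤ ‖T k x‖} ∈ J) :
    ∀ ε : ℝ, 0 < ε → {k | ε ≤ ‖T k‖} ∈ J :=
  stmt3_general J hJ_sub hJ_union hJ_fin T h
end

section
/- Every countably generated ideal on ℕ is strongly selective: if I is generated by countably many sets, then for every decreasing sequence (S_n) of I-positive sets there exists an I-positive set S = {x_0 < x_1 < x_2 < …} such that x_{n+1} ∈ S_{x_n} for all n. -/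
/-- Every countably generated ideal on `ℕ` is strongly selective: for every decreasing
sequence `(S n)` of `I`-positive sets there is an `I`-positive set `{x 0 < x 1 < …}` with
`x (n+1) ∈ S (x n)` for all `n`. -/
theorem stmt6 (I : Set (Set ℕ))
    (hI_sub : ∀ S T : Set ℕ, S ∈ I → T ⊆ S → T ∈ I)
    (hI_union : ∀ S T : Set ℕ, S ∈ I → T ∈ I → S ∪ T ∈ I)
    (hI_fin : ∀ S : Set ℕ, S.Finite → S ∈ I)
    (hI_proper : Set.univ ∉ I)
    (hcg : ∃ Q : ℕ → Set ℕ, ∀ S : Set ℕ, S ∈ I ↔ ∃ F : Finset ℕ, S ⊆ ⋃ j ∈ F, Q j) :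
    ∀ S : ℕ → Set ℕ, (∀ n, S (n + 1) ⊆ S n) → (∀ n, S n ∉ I) →
      ∃ x : ℕ → ℕ, StrictMono x ∧ Set.range x ∉ I ∧ ∀ n, x (n + 1) ∈ S (x n) := by
  obtain ⟨Q, hQ⟩ := hcg
  intro S _hdec hpos
  have key : ∀ n b : ℕ, ∃ k, k ∈ S b ∧ b < k ∧ ∀ i ≤ n, k ∉ Q i := by
    intro n b
    by_contra h
    push_neg at h
    apply hpos b
    apply hI_sub ((⋃ i ∈ Finset.range (n+1), Q i) ∪ Set.Iic b) (S b)
    · apply hI_union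
      · exact (hQ _).mpr ⟨Finset.range (n+1), subset_rfl⟩
      · exact hI_fin _ (Set.finite_Iic b)
    · intro k hk
      by_cases hb : b < k
      · obtain ⟨i, hi, hik⟩ := h k hk hb
        exact Or.inl (Set.mem_biUnion (Finset.mem_range.mpr (Nat.lt_succ_of_le hi)) hik)
      · exact Or.inr (Nat.le_of_not_lt hb)
  choose f hf1 hf2 hf3 using key
  set x : ℕ → ℕ := fun n => Nat.rec 0 (fun m xm => f m xm) n with hx
  have hxs : ∀ n, x (n + 1) = f n (x n) := fun n => rfl
  refine ⟨x, ?_, ?_, ?_⟩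
  · apply strictMono_nat_of_lt_succ
    intro n
    rw [hxs]
    exact hf2 n (x n)
  · intro hmem
    obtain ⟨F, hF⟩ := (hQ _).mp hmem
    set n := F.sup id with hn
    have : x (n + 1) ∈ ⋃ j ∈ F, Q j := hF ⟨n + 1, rfl⟩
    obtain ⟨j, hjF, hj⟩ := by simpa using this
    exact hf3 n (x n) j (Finset.le_sup (f := id) hjF) (by rwa [hxs] at hj)
  · intro n
    rw [hxs]
    exact hf1 n (x n)
end

section
/- Ideal Hahn–Schur theorem: Let J be a countably generated ideal on ℕ and A = (a_{n,k}) an infinite real matrix with ∑_k |a_{n,k}| < ∞ for every n, such that for every subset E ⊆ ℕ, the sequence (∑_{k∈E} a_{n,k})_n J-converges to 0. Then the sequence (∑_k |a_{n,k}|)_n J-converges to 0. -/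
open Filter Topology

private lemma tsum_indicator_iio (f : ℕ → ℝ) (N : ℕ) :
    ∑' k, Set.indicator (Set.Iio N) (fun k => |f k|) k = ∑ k ∈ Finset.range N, |f k| := by
  rw [tsum_eq_sum (s := Finset.range N)]
  · exact Finset.sum_congr rfl fun k hk =>
      Set.indicator_of_mem (by simpa using Finset.mem_range.mp hk) _
  · intro k hk
    exact Set.indicator_of_notMem (by simpa using Finset.mem_range.not.mp hk) _

private lemma abs_indicator (S : Set ℕ) (f : ℕ → ℝ) (k : ℕ) :
    |Set.indicator S f k| = Set.indicator S (fun k => |f k|) k := by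
  by_cases hk : k ∈ S <;> simp [Set.indicator_apply, hk]

private lemma abs_tsum_le (f : ℕ → ℝ) (hf : Summable fun k => |f k|) :
    |∑' k, f k| ≤ ∑' k, |f k| := by
  have := norm_tsum_le_tsum_norm (f := f) (by simpa [Real.norm_eq_abs] using hf)
  simpa [Real.norm_eq_abs] using this

set_option maxHeartbeats 1000000 in
/-- Classical Hahn–Schur core (contradiction form). -/
private lemma hahn_schur_aux (b : ℕ → ℕ → ℝ) (ε : ℝ) (hε : 0 < ε)
    (hsum : ∀ n, Summable (fun k => |b n k|))
    (hconv : ∀ E : Set ℕ, Tendsto (fun n => ∑' k, Set.indicator E (b n) k) atTop (𝓝 0))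
    (hbig : ∀ n, ε ≤ ∑' k, |b n k|) : False := by
  classical
  set H : ℕ → ℕ → ℝ := fun n N => ∑ k ∈ Finset.range N, |b n k| with hH_def
  set t : ℕ → ℝ := fun n => ∑' k, |b n k| with ht_def
  -- columns tend to 0
  have hcol : ∀ k, Tendsto (fun n => b n k) atTop (𝓝 0) := by
    intro k
    have h1 := hconv {k}
    have h2 : ∀ n, ∑' j, Set.indicator {k} (b n) j = b n k := by
      intro n
      rw [tsum_eq_single k (fun j hj => Set.indicator_of_notMem (by simpa using hj) _)]
      exact Set.indicator_of_mem rfl _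
    simpa [h2] using h1
  -- heads tend to 0
  have hhead : ∀ N, Tendsto (fun n => H n N) atTop (𝓝 0) := by
    intro N
    have : Tendsto (fun n => ∑ k ∈ Finset.range N, |b n k|) atTop
        (𝓝 (∑ k ∈ Finset.range N, (0:ℝ))) := by
      refine tendsto_finset_sum _ fun k _ => ?_
      simpa using (hcol k).abs
    simpa using this
  -- partial sums tend to total
  have htail : ∀ n, Tendsto (fun N => H n N) atTop (𝓝 (t n)) :=
    fun n => (hsum n).hasSum.tendsto_sum_nat
  -- the choice lemma
  have L : ∀ M N : ℕ, ∃ p : ℕ × ℕ, M < p.1 ∧ N < p.2 ∧ H p.1 N < ε/10 ∧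
      t p.1 - H p.1 p.2 < ε/10 := by
    intro M N
    have h1 : ∀ᶠ n in atTop, H n N < ε/10 :=
      (hhead N).eventually_lt_const (by positivity)
    obtain ⟨n, hn1, hn2⟩ := (h1.and (eventually_gt_atTop M)).exists
    have h2 : ∀ᶠ K in atTop, t n - ε/10 < H n K :=
      (htail n).eventually_const_lt (by linarith [hε])
    obtain ⟨K, hK1, hK2⟩ := (h2.and (eventually_gt_atTop N)).exists
    exact ⟨(n, K), hn2, hK2, hn1, by linarith⟩
  choose F hF1 hF2 hF3 hF4 using L
  -- build the sequences
  set s : ℕ → ℕ × ℕ := fun i => Nat.rec (F 0 0) (fun _ p => F p.1 p.2) i with hs_def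
  set m : ℕ → ℕ := fun i => (s i).1 with hm_def
  set K : ℕ → ℕ := fun i => Nat.rec 0 (fun j _ => (s j).2) i with hK_def
  have hs_succ : ∀ i, s (i+1) = F (s i).1 (s i).2 := fun i => rfl
  have hK_succ : ∀ i, K (i+1) = (s i).2 := fun i => rfl
  have hs_isF : ∀ i, ∃ M N, s i = F M N ∧ N = K i := by
    intro i
    cases i with
    | zero => exact ⟨0, 0, rfl, rfl⟩
    | succ j => exact ⟨(s j).1, (s j).2, rfl, rfl⟩
  have hHsmall : ∀ i, H (m i) (K i) < ε/10 := by
    intro i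
    obtain ⟨M, N, hMN, hN⟩ := hs_isF i
    have := hF3 M N
    rw [← hMN, hN] at this
    exact this
  have htsmall : ∀ i, t (m i) - H (m i) (K (i+1)) < ε/10 := by
    intro i
    obtain ⟨M, N, hMN, _⟩ := hs_isF i
    have := hF4 M N
    rw [← hMN] at this
    rw [hK_succ i]
    exact this
  have hKmono : StrictMono K := by
    refine strictMono_nat_of_lt_succ fun i => ?_
    obtain ⟨M, N, hMN, hN⟩ := hs_isF i
    have := hF2 M N
    rw [← hMN] at this
    rw [hK_succ i, ← hN]
    exact this
  have hmmono : StrictMono m := by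
    refine strictMono_nat_of_lt_succ fun i => ?_
    have := hF1 (s i).1 (s i).2
    rw [← hs_succ i] at this
    exact this
  -- block selection
  have hblock : ∀ i, (4:ℝ)*ε/5 ≤ ∑ k ∈ Finset.Ico (K i) (K (i+1)), |b (m i) k| := by
    intro i
    rw [Finset.sum_Ico_eq_sub _ (hKmono (Nat.lt_succ_self i)).le]
    have h1 := hHsmall i
    have h2 := htsmall i
    have h3 := hbig (m i)
    simp only [hH_def, ht_def] at *
    linarith
  have hEi : ∀ i, ∃ e : Finset ℕ, e ⊆ Finset.Ico (K i) (K (i+1)) ∧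
      2*ε/5 ≤ |∑ k ∈ e, b (m i) k| := by
    intro i
    set Fi := Finset.Ico (K i) (K (i+1)) with hFi
    set P := Fi.filter (fun k => 0 ≤ b (m i) k) with hP
    have hsplit := Finset.sum_filter_add_sum_filter_not Fi (fun k => 0 ≤ b (m i) k)
      (fun k => |b (m i) k|)
    by_cases hc : 2*ε/5 ≤ ∑ k ∈ P, |b (m i) k|
    · refine ⟨P, Finset.filter_subset _ _, ?_⟩
      have : ∑ k ∈ P, b (m i) k = ∑ k ∈ P, |b (m i) k| :=
        Finset.sum_congr rfl fun k hk => (abs_of_nonneg (Finset.mem_filter.mp hk).2).symm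
      rw [this, abs_of_nonneg (Finset.sum_nonneg fun k _ => abs_nonneg _)]
      exact hc
    · refine ⟨Fi.filter (fun k => ¬ 0 ≤ b (m i) k), Finset.filter_subset _ _, ?_⟩
      have hge : 2*ε/5 ≤ ∑ k ∈ Fi.filter (fun k => ¬ 0 ≤ b (m i) k), |b (m i) k| := by
        have := hblock i
        rw [hFi] at hsplit ⊢
        push_neg at hc
        linarith
      have heq : ∑ k ∈ Fi.filter (fun k => ¬ 0 ≤ b (m i) k), b (m i) k
          = -∑ k ∈ Fi.filter (fun k => ¬ 0 ≤ b (m i) k), |b (m i) k| := by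
        rw [← Finset.sum_neg_distrib]
        refine Finset.sum_congr rfl fun k hk => ?_
        have := (Finset.mem_filter.mp hk).2
        push_neg at this
        rw [abs_of_neg this]; ring
      rw [heq, abs_neg, abs_of_nonneg (Finset.sum_nonneg fun k _ => abs_nonneg _)]
      exact hge
  choose Ei hEsub hEbig using hEi
  set E : Set ℕ := ⋃ i, (Ei i : Set ℕ) with hE_def
  -- the key intersection property
  have hinter : ∀ i, E ∩ Set.Ico (K i) (K (i+1)) = (Ei i : Set ℕ) := by
    intro i
    apply Set.Subset.antisymm
    · rintro x ⟨hxE, hx1, hx2⟩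
      obtain ⟨_, ⟨j, rfl⟩, hxj⟩ := hxE
      rcases lt_trichotomy j i with hji | rfl | hij
      · have := (Finset.mem_Ico.mp (hEsub j hxj)).2
        have h2 : K (j+1) ≤ K i := hKmono.monotone (show j+1 ≤ i by omega)
        omega
      · exact hxj
      · have := (Finset.mem_Ico.mp (hEsub j hxj)).1
        have h2 : K (i+1) ≤ K j := hKmono.monotone (show i+1 ≤ j by omega)
        omega
    · intro x hx
      refine ⟨Set.mem_iUnion.mpr ⟨i, hx⟩, ?_⟩
      have := Finset.mem_Ico.mp (hEsub i hx)
      exact ⟨this.1, this.2⟩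
  -- lower bound on |g (m i) E|
  have hlow : ∀ i, ε/5 ≤ |∑' k, Set.indicator E (b (m i)) k| := by
    intro i
    set r := m i with hr
    have hKi : K i < K (i+1) := hKmono (Nat.lt_succ_self i)
    have hs0 : Summable (b r) := (hsum r).of_abs
    have s1 := hs0.indicator (E ∩ Set.Iio (K i))
    have s2 := hs0.indicator ((Ei i : Set ℕ))
    have s3 := hs0.indicator (E ∩ Set.Ici (K (i+1)))
    have hdecomp : Set.indicator E (b r) = fun k =>
        Set.indicator (E ∩ Set.Iio (K i)) (b r) k + Set.indicator ((Ei i : Set ℕ)) (b r) k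
          + Set.indicator (E ∩ Set.Ici (K (i+1))) (b r) k := by
      funext k
      rw [← hinter i]
      by_cases hkE : k ∈ E
      · rcases lt_or_ge k (K i) with h1 | h1
        · have nm2 : k ∉ E ∩ Set.Ico (K i) (K (i+1)) := by
            rintro ⟨-, hk1, hk2⟩; omega
          have nm3 : k ∉ E ∩ Set.Ici (K (i+1)) := by
            rintro ⟨-, hk1⟩; simp only [Set.mem_Ici] at hk1; omega
          rw [Set.indicator_of_mem hkE, Set.indicator_of_mem (Set.mem_inter hkE (Set.mem_Iio.mpr h1)),
            Set.indicator_of_notMem nm2, Set.indicator_of_notMem nm3]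
          ring
        · rcases lt_or_ge k (K (i+1)) with h2 | h2
          · have nm1 : k ∉ E ∩ Set.Iio (K i) := by
              rintro ⟨-, hk1⟩; simp only [Set.mem_Iio] at hk1; omega
            have nm3 : k ∉ E ∩ Set.Ici (K (i+1)) := by
              rintro ⟨-, hk1⟩; simp only [Set.mem_Ici] at hk1; omega
            rw [Set.indicator_of_mem hkE, Set.indicator_of_mem (Set.mem_inter hkE (Set.mem_Ico.mpr ⟨h1, h2⟩)),
              Set.indicator_of_notMem nm1, Set.indicator_of_notMem nm3]
            ring
          · have nm1 : k ∉ E ∩ Set.Iio (K i) := by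
              rintro ⟨-, hk1⟩; simp only [Set.mem_Iio] at hk1; omega
            have nm2 : k ∉ E ∩ Set.Ico (K i) (K (i+1)) := by
              rintro ⟨-, hk1, hk2⟩; omega
            rw [Set.indicator_of_mem hkE, Set.indicator_of_mem (Set.mem_inter hkE (Set.mem_Ici.mpr h2)),
              Set.indicator_of_notMem nm1, Set.indicator_of_notMem nm2]
            ring
      · have nm1 : k ∉ E ∩ Set.Iio (K i) := fun hk => hkE hk.1
        have nm2 : k ∉ E ∩ Set.Ico (K i) (K (i+1)) := fun hk => hkE hk.1
        have nm3 : k ∉ E ∩ Set.Ici (K (i+1)) := fun hk => hkE hk.1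
        rw [Set.indicator_of_notMem hkE, Set.indicator_of_notMem nm1,
          Set.indicator_of_notMem nm2, Set.indicator_of_notMem nm3]
        ring
    have hsplit : ∑' k, Set.indicator E (b r) k
        = (∑' k, Set.indicator (E ∩ Set.Iio (K i)) (b r) k)
          + (∑' k, Set.indicator ((Ei i : Set ℕ)) (b r) k)
          + (∑' k, Set.indicator (E ∩ Set.Ici (K (i+1))) (b r) k) := by
      rw [hdecomp]
      rw [Summable.tsum_add (s1.add s2) s3, Summable.tsum_add s1 s2]
    -- middle term value
    have hmid : ∑' k, Set.indicator ((Ei i : Set ℕ)) (b r) k = ∑ k ∈ Ei i, b r k := by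
      rw [tsum_eq_sum (s := Ei i) (fun k hk => Set.indicator_of_notMem (by simpa using hk) _)]
      exact Finset.sum_congr rfl fun k hk => Set.indicator_of_mem (by simpa using hk) _
    -- generic bound for pieces
    have hbound : ∀ S : Set ℕ, ∀ N : ℕ, S ⊆ Set.Iio N →
        |∑' k, Set.indicator S (b r) k| ≤ ∑ k ∈ Finset.range N, |b r k| := by
      intro S N hSN
      have sum_abs : Summable (fun k => |Set.indicator S (b r) k|) :=
        (summable_congr fun k => abs_indicator S (b r) k).mpr ((hsum r).indicator S)
      calc |∑' k, Set.indicator S (b r) k| ≤ ∑' k, |Set.indicator S (b r) k| :=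
            abs_tsum_le _ sum_abs
        _ = ∑' k, Set.indicator S (fun k => |b r k|) k := tsum_congr fun k => abs_indicator S _ k
        _ ≤ ∑' k, Set.indicator (Set.Iio N) (fun k => |b r k|) k := by
            refine Summable.tsum_le_tsum (fun k => Set.indicator_le_indicator_of_subset hSN
              (fun k => abs_nonneg _) k) ?_ ?_
            · exact (summable_congr fun k => (abs_indicator S (b r) k).symm).mpr sum_abs
            · exact (hsum r).indicator _
        _ = ∑ k ∈ Finset.range N, |b r k| := tsum_indicator_iio _ N
    have hlowpiece : |∑' k, Set.indicator (E ∩ Set.Iio (K i)) (b r) k| ≤ H r (K i) :=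
      hbound _ _ Set.inter_subset_right
    -- high piece bound
    have hhi_eq : ∑' k, Set.indicator (Set.Ici (K (i+1))) (fun k => |b r k|) k
        = t r - H r (K (i+1)) := by
      have hadd : (fun k => Set.indicator (Set.Iio (K (i+1))) (fun k => |b r k|) k
          + Set.indicator (Set.Ici (K (i+1))) (fun k => |b r k|) k) = fun k => |b r k| := by
        funext x
        have := Set.indicator_self_add_compl (Set.Iio (K (i+1))) (fun k => |b r k|)
        simpa [Set.compl_Iio] using congrFun this x
      have h1 : ∑' k, (Set.indicator (Set.Iio (K (i+1))) (fun k => |b r k|) k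
          + Set.indicator (Set.Ici (K (i+1))) (fun k => |b r k|) k) = t r := by
        rw [hadd]
      rw [Summable.tsum_add ((hsum r).indicator _) ((hsum r).indicator _), tsum_indicator_iio] at h1
      simp only [hH_def, ht_def] at *
      linarith
    have hhipiece : |∑' k, Set.indicator (E ∩ Set.Ici (K (i+1))) (b r) k|
        ≤ t r - H r (K (i+1)) := by
      have sum_abs : Summable (fun k => |Set.indicator (E ∩ Set.Ici (K (i+1))) (b r) k|) :=
        (summable_congr fun k => abs_indicator _ (b r) k).mpr ((hsum r).indicator _)
      calc |∑' k, Set.indicator (E ∩ Set.Ici (K (i+1))) (b r) k|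
          ≤ ∑' k, |Set.indicator (E ∩ Set.Ici (K (i+1))) (b r) k| :=
            abs_tsum_le _ sum_abs
        _ = ∑' k, Set.indicator (E ∩ Set.Ici (K (i+1))) (fun k => |b r k|) k :=
            tsum_congr fun k => abs_indicator _ _ k
        _ ≤ ∑' k, Set.indicator (Set.Ici (K (i+1))) (fun k => |b r k|) k := by
            refine Summable.tsum_le_tsum (fun k => Set.indicator_le_indicator_of_subset
              Set.inter_subset_right (fun k => abs_nonneg _) k) ?_ ((hsum r).indicator _)
            exact (summable_congr fun k => (abs_indicator _ (b r) k).symm).mpr sum_abs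
        _ = t r - H r (K (i+1)) := hhi_eq
    have hmidbig : 2*ε/5 ≤ |∑' k, Set.indicator ((Ei i : Set ℕ)) (b r) k| := by
      rw [hmid]; exact hEbig i
    have e1 := hHsmall i
    have e2 := htsmall i
    have habs : |∑' k, Set.indicator ((Ei i : Set ℕ)) (b r) k|
        ≤ |∑' k, Set.indicator E (b r) k|
          + |∑' k, Set.indicator (E ∩ Set.Iio (K i)) (b r) k|
          + |∑' k, Set.indicator (E ∩ Set.Ici (K (i+1))) (b r) k| := by
      rw [hsplit]
      set x := ∑' k, Set.indicator (E ∩ Set.Iio (K i)) (b r) k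
      set y := ∑' k, Set.indicator ((Ei i : Set ℕ)) (b r) k
      set z := ∑' k, Set.indicator (E ∩ Set.Ici (K (i+1))) (b r) k
      have h := abs_add_three (x + y + z) (-x) (-z)
      simp only [abs_neg] at h
      have he : (x + y + z) + -x + -z = y := by ring
      rw [he] at h
      exact h
    linarith
  -- contradiction
  have hcomp : Tendsto (fun i => ∑' k, Set.indicator E (b (m i)) k) atTop (𝓝 0) :=
    (hconv E).comp hmmono.tendsto_atTop
  have h1 : ∀ᶠ i in atTop, |∑' k, Set.indicator E (b (m i)) k| < ε/5 := by
    have ha' := hcomp.eventually_lt_const (show (0:ℝ) < ε/5 by positivity)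
    have hb' := hcomp.eventually_const_lt (show -(ε/5) < (0:ℝ) by linarith)
    filter_upwards [ha', hb'] with i hi1 hi2
    rw [abs_lt]; exact ⟨hi2, hi1⟩
  obtain ⟨i, hi⟩ := h1.exists
  exact absurd (hlow i) (by linarith)

/-- Ideal Hahn–Schur theorem: if `J` is a countably generated ideal, each row of the real
matrix `a` is absolutely summable, and for every `E ⊆ ℕ` the sequence `(∑_{k ∈ E} a n k)_n`
`J`-converges to `0`, then `(∑ k, |a n k|)_n` `J`-converges to `0`. -/
theorem stmt9 (J : Set (Set ℕ))
    (hJ_sub : ∀ S T : Set ℕ, S ∈ J → T ⊆ S → T ∈ J)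
    (hJ_union : ∀ S T : Set ℕ, S ∈ J → T ∈ J → S ∪ T ∈ J)
    (hJ_fin : ∀ S : Set ℕ, S.Finite → S ∈ J)
    (hJ_proper : Set.univ ∉ J)
    (hcg : ∃ Q : ℕ → Set ℕ, ∀ S : Set ℕ, S ∈ J ↔ ∃ F : Finset ℕ, S ⊆ ⋃ j ∈ F, Q j)
    (a : ℕ → ℕ → ℝ)
    (ha : ∀ n, Summable (fun k => |a n k|))
    (h : ∀ E : Set ℕ, ∀ ε : ℝ, 0 < ε →
      {n | ε ≤ |∑' k, Set.indicator E (a n) k|} ∈ J) :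
    ∀ ε : ℝ, 0 < ε → {n | ε ≤ ∑' k, |a n k|} ∈ J := by
  intro ε hε
  by_contra hT
  obtain ⟨Q, hQ⟩ := hcg
  set Q' : ℕ → Set ℕ := fun j => ⋃ i ∈ Finset.range (j+1), Q i with hQ'_def
  have hQ'J : ∀ j, Q' j ∈ J := fun j => (hQ _).mpr ⟨Finset.range (j+1), subset_rfl⟩
  have hQ'mono : Monotone Q' := by
    intro j j' hj x hx
    simp only [hQ'_def, Set.mem_iUnion, Finset.mem_range] at hx ⊢
    obtain ⟨i, hi, hxi⟩ := hx
    exact ⟨i, by omega, hxi⟩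
  have hcov : ∀ S ∈ J, ∃ j : ℕ, S ⊆ Q' j := by
    intro S hS
    obtain ⟨F, hF⟩ := (hQ S).mp hS
    refine ⟨F.sup id, fun x hx => ?_⟩
    obtain ⟨_, ⟨i, rfl⟩, _, ⟨hiF, rfl⟩, hxi⟩ := hF hx
    simp only [hQ'_def, Set.mem_iUnion, Finset.mem_range]
    exact ⟨i, Nat.lt_succ_of_le (Finset.le_sup (f := id) hiF), hxi⟩
  have hpick : ∀ i : ℕ, ∃ n, ε ≤ ∑' k, |a n k| ∧ n ∉ Q' i := by
    intro i
    by_contra hcon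
    push_neg at hcon
    exact hT (hJ_sub _ _ (hQ'J i) fun n hn => hcon n hn)
  choose n hnT hnQ using hpick
  refine hahn_schur_aux (fun i => a (n i)) ε hε (fun i => ha (n i)) (fun E => ?_) hnT
  rw [Metric.tendsto_atTop]
  intro δ hδ
  obtain ⟨j, hj⟩ := hcov _ (h E δ hδ)
  refine ⟨j, fun i hi => ?_⟩
  rw [Real.dist_eq, sub_zero]
  by_contra habs
  push_neg at habs
  exact hnQ i (hQ'mono hi (hj habs))
end

section
/- Let X, Y be Banach spaces and A = (A_{n,k}) a matrix of linear operators in L(X,Y) such that for every sequence x ∈ X^ℕ, the transforms A_n x = ∑_k A_{n,k} x_k are all norm convergent and the sequence (A_n x) is J-bounded, where J is a countably generated ideal on ℕ. Then A is row finite (each row has only finitely many nonzero entries), and there exist a set J₀ in the dual filter J* and k₁ ∈ ℕ such that A_{n,k} = 0 for all n ∈ J₀ and all k ≥ k₁. -/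
/-!
If row `n` had infinitely many nonzero entries, rescaling would give `x` with
`‖A n k (x k)‖ ≥ 1` at each of them, and the `n`-th series would diverge.

The dual filter `J*` is `⨅ j, 𝓟 (Q j)ᶜ`, so it is countably generated, with an antitone basis
`s i`. If the second claim failed, every `s i` would contain rows with nonzero entries arbitrarily
far to the right, and a gliding hump construction applies: at stage `i`, with a vector `xᵢ` and a
bound `Kᵢ`, pick a row `nᵢ ∈ s i` with a nonzero entry at some `k ≥ Kᵢ`, change `xᵢ` only at `k`
so that the (finite) `nᵢ`-th sum exceeds `i + 1`, and put `Kᵢ₊₁` beyond the last nonzero entry of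
row `nᵢ`. The `xᵢ` stabilise to some `x` with `‖(A x) nᵢ‖ ≥ i + 1`, and since `nᵢ → J*` this
contradicts the `J`-boundedness of `A x`.
-/

open Filter Finset Topology

theorem tendsto_zero_of_tendsto_sum_range {G : Type*} [AddCommGroup G] [TopologicalSpace G]
    [IsTopologicalAddGroup G] {f : ℕ → G} {a : G}
    (h : Tendsto (fun m => ∑ k ∈ range m, f k) atTop (𝓝 a)) : Tendsto f atTop (𝓝 0) := by
  simpa [sum_range_succ] using (h.comp (tendsto_add_atTop_nat 1)).sub h

theorem Filter.mem_iInf_principal_compl_iff {α : Type*} {Q : ℕ → Set α} {S : Set α} :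
    S ∈ ⨅ j, 𝓟 (Q j)ᶜ ↔ ∃ F : Finset ℕ, Sᶜ ⊆ ⋃ j ∈ F, Q j := by
  simp only [mem_iInf_finite, iInf_principal_finset, mem_principal, ← Set.compl_iUnion₂,
    Set.compl_subset_comm]

theorem eq_sum_range_of_tendsto_sum_range {G : Type*} [AddCommMonoid G] [TopologicalSpace G]
    [T2Space G] {f : ℕ → G} {a : G} {K : ℕ}
    (h : Tendsto (fun m => ∑ k ∈ range m, f k) atTop (𝓝 a)) (hf : ∀ k, K ≤ k → f k = 0) :
    a = ∑ k ∈ range K, f k :=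
  tendsto_nhds_unique h
    (hasSum_sum_of_ne_finset_zero fun k hk => hf k (by simpa using hk)).tendsto_sum_nat

theorem exists_eqOn_Iio_of_eqOn_succ {α : Type*} {x : ℕ → ℕ → α} {K : ℕ → ℕ} (hK : StrictMono K)
    (hx : ∀ i, Set.EqOn (x (i + 1)) (x i) (Set.Iio (K i))) :
    ∃ z : ℕ → α, ∀ i, Set.EqOn z (x i) (Set.Iio (K i)) := by
  have hstable : ∀ i j, i ≤ j → Set.EqOn (x j) (x i) (Set.Iio (K i)) := by
    intro i j hij k hk
    induction j, hij using Nat.le_induction with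
    | base => rfl
    | succ j hij ih => exact (hx j (lt_of_lt_of_le hk (hK.monotone hij))).trans ih
  refine ⟨fun k => x (k + 1) k, fun i k hk => ?_⟩
  rcases le_total i (k + 1) with h | h
  · exact hstable i _ h hk
  · exact (hstable _ i h ((Nat.lt_succ_self k).trans_le (hK.le_apply))).symm

section

variable {𝕜 X Y : Type*} [NontriviallyNormedField 𝕜] [AddCommMonoid X] [Module 𝕜 X]
  [NormedAddCommGroup Y] [NormedSpace 𝕜 Y]

theorem LinearMap.exists_le_norm_add_apply {f : X →ₗ[𝕜] Y} (hf : f ≠ 0) (s : Y) (R : ℝ) :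
    ∃ v, R ≤ ‖s + f v‖ := by
  obtain ⟨w, hw⟩ : ∃ w, f w ≠ 0 := by simpa [LinearMap.ext_iff] using hf
  have hfw : 0 < ‖f w‖ := norm_pos_iff.2 hw
  obtain ⟨c, hc⟩ := NormedField.exists_lt_norm 𝕜 ((R + ‖s‖) / ‖f w‖)
  refine ⟨c • w, ?_⟩
  have hlarge : R + ‖s‖ ≤ ‖f (c • w)‖ := by
    rw [map_smul, norm_smul]
    exact ((div_lt_iff₀ hfw).1 hc).le
  have := norm_sub_norm_le (f (c • w)) (-s)
  rw [norm_neg, sub_neg_eq_add, add_comm] at this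
  linarith

theorem finite_setOf_ne_zero_of_forall_tendsto_sum_range {A : ℕ → X →ₗ[𝕜] Y}
    (hA : ∀ x : ℕ → X, ∃ y, Tendsto (fun m => ∑ k ∈ range m, A k (x k)) atTop (𝓝 y)) :
    {k | A k ≠ 0}.Finite := by
  have hbig : ∀ k, ∃ v, A k ≠ 0 → 1 ≤ ‖A k v‖ := fun k => by
    by_cases hk : A k = 0
    · exact ⟨0, absurd hk⟩
    · obtain ⟨v, hv⟩ := (A k).exists_le_norm_add_apply hk 0 1
      exact ⟨v, fun _ => by simpa using hv⟩
  choose x hx using hbig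
  obtain ⟨y, hy⟩ := hA x
  have hsmall : ∀ᶠ k in atTop, ‖A k (x k)‖ < 1 :=
    (tendsto_zero_iff_norm_tendsto_zero.1 (tendsto_zero_of_tendsto_sum_range hy)).eventually_lt_const
      one_pos
  have hzero : ∀ᶠ k in atTop, A k = 0 :=
    hsmall.mono fun k hk => by_contra fun h => (hx k h).not_gt hk
  rwa [← Nat.cofinite_eq_atTop, eventually_cofinite] at hzero

theorem exists_eqOn_Iio_le_norm_sum_range {a : ℕ → X →ₗ[𝕜] Y} (ha : {k | a k ≠ 0}.Finite)
    {K k : ℕ} (hk : K ≤ k) (hak : a k ≠ 0) (x : ℕ → X) (R : ℝ) :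
    ∃ K' > K, ∃ x' : ℕ → X, Set.EqOn x' x (Set.Iio K) ∧ (∀ j, K' ≤ j → a j = 0) ∧
      R ≤ ‖∑ j ∈ range K', a j (x' j)‖ := by
  obtain ⟨b, hb⟩ := ha.bddAbove
  set K' := max (k + 1) (b + 1)
  obtain ⟨w, hw⟩ := (a k).exists_le_norm_add_apply hak (∑ j ∈ range K', a j (x j)) R
  have hbump : ∑ j ∈ range K', a j ((Pi.single k w : ℕ → X) j) = a k w :=
    (sum_eq_single_of_mem k (mem_range.2 (by omega)) fun j _ hj => by simp [hj]).trans (by simp)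
  refine ⟨K', by omega, x + Pi.single k w, fun j hj => ?_, fun j hj => ?_, ?_⟩
  · simp [(show j < k by simp at hj; omega).ne]
  · by_contra h
    have := hb h
    omega
  · simpa [map_add, sum_add_distrib, hbump] using hw

theorem exists_eventually_forall_ge_eq_zero (l : Filter ℕ) [l.IsCountablyGenerated]
    (A : ℕ → ℕ → X →ₗ[𝕜] Y)
    (hA : ∀ x : ℕ → X, ∃ y : ℕ → Y,
      (∀ n, Tendsto (fun m => ∑ k ∈ range m, A n k (x k)) atTop (𝓝 (y n))) ∧
      IsBoundedUnder (· ≤ ·) l fun n => ‖y n‖) :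
    ∃ k₁, ∀ᶠ n in l, ∀ k, k₁ ≤ k → A n k = 0 := by
  have hrow (n : ℕ) : {k | A n k ≠ 0}.Finite :=
    finite_setOf_ne_zero_of_forall_tendsto_sum_range fun x =>
      let ⟨y, hy, _⟩ := hA x; ⟨y n, hy n⟩
  obtain ⟨s, hs⟩ := l.exists_antitone_basis
  by_contra! hfreq
  have hstep (i : ℕ) (p : ℕ × (ℕ → X)) : ∃ n ∈ s i, ∃ q : ℕ × (ℕ → X), p.1 < q.1 ∧
      Set.EqOn q.2 p.2 (Set.Iio p.1) ∧ (∀ k, q.1 ≤ k → A n k = 0) ∧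
      (i : ℝ) + 1 ≤ ‖∑ k ∈ range q.1, A n k (q.2 k)‖ := by
    obtain ⟨n, hn, k, hk, hnk⟩ := hs.1.frequently_iff.1 (hfreq p.1) i trivial
    obtain ⟨K', hK', x', hx'⟩ := exists_eqOn_Iio_le_norm_sum_range (hrow n) hk hnk p.2 (i + 1)
    exact ⟨n, hn, (K', x'), hK', hx'⟩
  choose N hN next hnext using hstep
  let st (i : ℕ) : ℕ × (ℕ → X) := Nat.rec (0, 0) next i
  obtain ⟨z, hz⟩ := exists_eqOn_Iio_of_eqOn_succ (x := fun i => (st i).2)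
    (strictMono_nat_of_lt_succ fun i => (hnext i (st i)).1) fun i => (hnext i (st i)).2.1
  obtain ⟨y, hy, r, hr⟩ := hA z
  have hlarge (i : ℕ) : (i : ℝ) + 1 ≤ ‖y (N i (st i))‖ := by
    obtain ⟨-, -, hzero, hnorm⟩ := hnext i (st i)
    rwa [eq_sum_range_of_tendsto_sum_range (hy _) fun k hk => by simp [hzero k hk],
      sum_congr rfl fun k hk => congrArg _ (hz (i + 1) (by simpa using hk))]
  obtain ⟨i, hir, hi⟩ := ((hs.tendsto fun i => hN i (st i)).eventually (eventually_map.1 hr)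
    |>.and (tendsto_natCast_atTop_atTop.eventually_gt_atTop r)).exists
  linarith [hlarge i]

end

theorem stmt10_general {X Y : Type*} [NormedAddCommGroup X] [NormedSpace ℝ X]
    [NormedAddCommGroup Y] [NormedSpace ℝ Y]
    (J : Set (Set ℕ))
    (hcg : ∃ Q : ℕ → Set ℕ, ∀ S : Set ℕ, S ∈ J ↔ ∃ F : Finset ℕ, S ⊆ ⋃ j ∈ F, Q j)
    (A : ℕ → ℕ → X →ₗ[ℝ] Y)
    (hA : ∀ x : ℕ → X, ∃ y : ℕ → Y,
      (∀ n, Tendsto (fun m => ∑ k ∈ Finset.range m, A n k (x k)) atTop (nhds (y n))) ∧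
      ∃ r : ℝ, {n | r ≤ ‖y n‖} ∈ J) :
    (∀ n, {k | A n k ≠ 0}.Finite) ∧
    ∃ J₀ : Set ℕ, J₀ᶜ ∈ J ∧ ∃ k₁ : ℕ, ∀ n ∈ J₀, ∀ k, k₁ ≤ k → A n k = 0 := by
  obtain ⟨Q, hQ⟩ := hcg
  have hdual (S : Set ℕ) : S ∈ ⨅ j, 𝓟 (Q j)ᶜ ↔ Sᶜ ∈ J := by
    rw [mem_iInf_principal_compl_iff, hQ]
  refine ⟨fun n => finite_setOf_ne_zero_of_forall_tendsto_sum_range fun x => ?_, ?_⟩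
  · obtain ⟨y, hy, -⟩ := hA x
    exact ⟨y n, hy n⟩
  obtain ⟨k₁, hk₁⟩ := exists_eventually_forall_ge_eq_zero (⨅ j, 𝓟 (Q j)ᶜ) A fun x => by
    obtain ⟨y, hy, r, hr⟩ := hA x
    have hlt : ∀ᶠ n in ⨅ j, 𝓟 (Q j)ᶜ, ‖y n‖ < r :=
      (hdual _).2 (by simpa [Set.compl_ofPred] using hr)
    exact ⟨y, hy, isBoundedUnder_of_eventually_le (hlt.mono fun _ => le_of_lt)⟩
  exact ⟨_, (hdual _).1 hk₁, k₁, fun _ hn => hn⟩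

/-- If `J` is countably generated and, for every `X`-valued sequence `x`, the transform
`Ax` is everywhere defined and `J`-bounded, then `A` is row finite and there are
`J₀ ∈ J*` and `k₁` such that `A n k = 0` for all `n ∈ J₀` and `k ≥ k₁`. -/
theorem stmt10 {X Y : Type*} [NormedAddCommGroup X] [NormedSpace ℝ X] [CompleteSpace X]
    [NormedAddCommGroup Y] [NormedSpace ℝ Y] [CompleteSpace Y]
    (J : Set (Set ℕ))
    (hJ_sub : ∀ S T : Set ℕ, S ∈ J → T ⊆ S → T ∈ J)
    (hJ_union : ∀ S T : Set ℕ, S ∈ J → T ∈ J → S ∪ T ∈ J)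
    (hJ_fin : ∀ S : Set ℕ, S.Finite → S ∈ J)
    (hJ_proper : Set.univ ∉ J)
    (hcg : ∃ Q : ℕ → Set ℕ, ∀ S : Set ℕ, S ∈ J ↔ ∃ F : Finset ℕ, S ⊆ ⋃ j ∈ F, Q j)
    (A : ℕ → ℕ → X →ₗ[ℝ] Y)
    (hA : ∀ x : ℕ → X, ∃ y : ℕ → Y,
      (∀ n, Tendsto (fun m => ∑ k ∈ Finset.range m, A n k (x k)) atTop (nhds (y n))) ∧
      ∃ r : ℝ, {n | r ≤ ‖y n‖} ∈ J) :
    (∀ n, {k | A n k ≠ 0}.Finite) ∧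
    ∃ J₀ : Set ℕ, J₀ᶜ ∈ J ∧ ∃ k₁ : ℕ, ∀ n ∈ J₀, ∀ k, k₁ ≤ k → A n k = 0 :=
  stmt10_general J hcg A hA
end

section
/- Let X, Y be Banach spaces, I a tall ideal on ℕ, and A = (A_{n,k}) a matrix of linear operators in L(X,Y) such that for every sequence x ∈ X^ℕ supported on a set of I, the transform Ax is well defined and uniformly bounded (i.e., A maps c₀₀(X,I) into ℓ_∞(Y)). Then there exists k₁ ∈ ℕ such that A_{n,k} = 0 for all n ∈ ℕ and all k ≥ k₁. -/
open Filter

/-!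
Gliding hump. If infinitely many columns of `A` were nonzero, tallness yields an infinite
`T ∈ I` of nonzero columns. Since the terms of a convergent series tend to `0`, testing row `n`
on a sequence supported in `T` with `‖A n k (x k)‖ = 1` wherever `A n k ≠ 0` shows that each row
has only finitely many nonzero entries in `T`, so one can pick columns `k₀ < k₁ < …` in `T` and rows
`n₀, n₁, …` with `A (n_j) (k_j) ≠ 0` and `A (n_j) (k_l) = 0` for `j < l`. Choosing `x (k_j)`
recursively so that the `j`-th hump dominates everything before it by `j + 1` makes
`‖(A x) (n_j)‖ ≥ j + 1`, contradicting boundedness.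
-/

theorem LinearMap.exists_norm_apply_eq {X Y : Type*} [NormedAddCommGroup X] [NormedSpace ℝ X]
    [NormedAddCommGroup Y] [NormedSpace ℝ Y] {L : X →ₗ[ℝ] Y} (hL : L ≠ 0) {r : ℝ}
    (hr : 0 ≤ r) : ∃ v, ‖L v‖ = r := by
  obtain ⟨w, hw⟩ : ∃ w, L w ≠ 0 := by
    by_contra! h
    exact hL (LinearMap.ext h)
  have hLw : 0 < ‖L w‖ := norm_pos_iff.mpr hw
  refine ⟨(r / ‖L w‖) • w, ?_⟩
  rw [map_smul, norm_smul, Real.norm_of_nonneg (div_nonneg hr hLw.le),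
    div_mul_cancel₀ _ hLw.ne']

theorem tendsto_zero_of_tendsto_sum_range_s11 {Y : Type*} [NormedAddCommGroup Y] {f : ℕ → Y} {s : Y}
    (h : Tendsto (fun m => ∑ k ∈ Finset.range m, f k) atTop (nhds s)) :
    Tendsto f atTop (nhds 0) := by
  have := ((h.comp (tendsto_add_atTop_nat 1)).sub h)
  simpa only [sub_self, Function.comp_def, Finset.sum_range_succ_sub_sum] using this

theorem Nat.exists_eq_apply_truncate {X : Type*} [Zero X] (G : ℕ → (ℕ → X) → X) :
    ∃ x : ℕ → X, ∀ k, x k = G k (fun i => if i < k then x i else 0) := by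
  let p : ℕ → ℕ → X := fun k => Nat.rec 0 (fun k q => Function.update q k (G k q)) k
  have p_succ : ∀ k, p (k + 1) = Function.update (p k) k (G k (p k)) := fun _ => rfl
  have hp : ∀ k i, p k i = if i < k then p (i + 1) i else 0 := by
    intro k
    induction k with
    | zero => intro i; simp [p]
    | succ k ih =>
      intro i
      rcases lt_trichotomy i k with hik | rfl | hki
      · rw [p_succ, Function.update_of_ne hik.ne, ih, if_pos hik, if_pos (by omega)]
      · rw [if_pos (by omega)]
      · rw [p_succ, Function.update_of_ne hki.ne', ih, if_neg (by omega), if_neg (by omega)]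
  refine ⟨fun k => p (k + 1) k, fun k => ?_⟩
  beta_reduce
  rw [show p (k + 1) k = G k (p k) by rw [p_succ, Function.update_self]]
  exact congrArg (G k) (funext (hp k))

theorem finite_setOf_mem_and_ne_zero_of_tendsto {X Y : Type*} [NormedAddCommGroup X]
    [NormedSpace ℝ X] [NormedAddCommGroup Y] [NormedSpace ℝ Y] {T : Set ℕ}
    {L : ℕ → X →ₗ[ℝ] Y}
    (hL : ∀ x : ℕ → X, (∀ k ∉ T, x k = 0) →
      ∃ s, Tendsto (fun m => ∑ k ∈ Finset.range m, L k (x k)) atTop (nhds s)) :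
    {k | k ∈ T ∧ L k ≠ 0}.Finite := by
  classical
  by_contra hinf
  have hunit : ∀ k, ∃ v : X, k ∈ T ∧ L k ≠ 0 → ‖L k v‖ = 1 := fun k => by
    by_cases hk : k ∈ T ∧ L k ≠ 0
    · obtain ⟨v, hv⟩ := LinearMap.exists_norm_apply_eq hk.2 zero_le_one
      exact ⟨v, fun _ => hv⟩
    · exact ⟨0, fun h => absurd h hk⟩
  choose u hu using hunit
  let x : ℕ → X := fun k => if k ∈ T ∧ L k ≠ 0 then u k else 0
  obtain ⟨s, hs⟩ := hL x fun k hk => if_neg fun h => hk h.1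
  obtain ⟨N, hN⟩ := eventually_atTop.mp <|
    (tendsto_zero_of_tendsto_sum_range_s11 hs).norm.eventually_lt_const (by simp : ‖(0 : Y)‖ < 1)
  obtain ⟨k, hk, hNk⟩ := Set.Infinite.exists_gt hinf N
  have := hN k hNk.le
  rw [show x k = u k from if_pos hk, hu k hk] at this
  exact lt_irrefl _ this

theorem exists_strictMono_diagonal {T : Set ℕ} (hT : T.Infinite) {P : ℕ → ℕ → Prop}
    (hcol : ∀ k ∈ T, ∃ n, P n k) (hrow : ∀ n, {k | k ∈ T ∧ P n k}.Finite) :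
    ∃ kk nn : ℕ → ℕ, StrictMono kk ∧ (∀ j, kk j ∈ T) ∧ (∀ j, P (nn j) (kk j)) ∧
      ∀ j l, j < l → ¬ P (nn j) (kk l) := by
  choose B hB using fun n => (hrow n).bddAbove
  choose next hnextT hnext using hT.exists_gt
  choose row hrowP using fun M => hcol (next M) (hnextT M)
  -- `M j` bounds every column chosen so far and every nonzero entry in `T` of the rows chosen
  let M : ℕ → ℕ := fun j => Nat.rec 0 (fun _ m => max (next m) (B (row m))) j
  have hM_succ : ∀ j, M (j + 1) = max (next (M j)) (B (row (M j))) := fun _ => rfl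
  have hM_lt : ∀ j, M j < next (M j) := fun j => hnext (M j)
  have hM_mono : StrictMono M := strictMono_nat_of_lt_succ fun j =>
    (hM_lt j).trans_le (hM_succ j ▸ le_max_left _ _)
  refine ⟨fun j => next (M j), fun j => row (M j), strictMono_nat_of_lt_succ fun j => ?_,
    fun j => hnextT _, fun j => hrowP _, fun j l hjl hP => ?_⟩
  · have hle : next (M j) ≤ M (j + 1) := hM_succ j ▸ le_max_left _ _
    exact hle.trans_lt (hM_lt (j + 1))
  · have hle : next (M l) ≤ B (row (M j)) := hB (row (M j)) ⟨hnextT _, hP⟩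
    have hB_le : B (row (M j)) ≤ M (j + 1) := hM_succ j ▸ le_max_right _ _
    have := hM_mono.monotone (show j + 1 ≤ l from hjl)
    have := hM_lt l
    omega

theorem exists_gliding_hump {X Y : Type*} [NormedAddCommGroup X] [NormedSpace ℝ X]
    [NormedAddCommGroup Y] [NormedSpace ℝ Y] {A : ℕ → ℕ → X →ₗ[ℝ] Y} {kk nn : ℕ → ℕ}
    (hkk : StrictMono kk) (hne : ∀ j, A (nn j) (kk j) ≠ 0)
    (hvanish : ∀ j l, j < l → A (nn j) (kk l) = 0) :
    ∃ x : ℕ → X, (∀ k ∉ Set.range kk, x k = 0) ∧ ∀ j y,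
      Tendsto (fun m => ∑ k ∈ Finset.range m, A (nn j) k (x k)) atTop (nhds y) →
        (j : ℝ) + 1 ≤ ‖y‖ := by
  classical
  choose hump hhump using fun j (r : ℝ) =>
    LinearMap.exists_norm_apply_eq (hne j) (abs_nonneg r)
  obtain ⟨x, hx⟩ := Nat.exists_eq_apply_truncate fun k z =>
    if h : ∃ j, kk j = k then
      hump h.choose (h.choose + 1 + ‖∑ i ∈ Finset.range k, A (nn h.choose) i (z i)‖)
    else 0
  beta_reduce at hx
  have hx_off : ∀ k ∉ Set.range kk, x k = 0 := fun k hk => by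
    rw [hx k, dif_neg (show ¬∃ j, kk j = k from hk)]
  refine ⟨x, hx_off, fun j y hy => ?_⟩
  set S := ∑ i ∈ Finset.range (kk j), A (nn j) i (x i)
  have hhump_j : ‖A (nn j) (kk j) (x (kk j))‖ = j + 1 + ‖S‖ := by
    have hchoose : (⟨j, rfl⟩ : ∃ i, kk i = kk j).choose = j :=
      hkk.injective (⟨j, rfl⟩ : ∃ i, kk i = kk j).choose_spec
    have htrunc : ∑ i ∈ Finset.range (kk j), A (nn j) i (if i < kk j then x i else 0) = S :=
      Finset.sum_congr rfl fun i hi => by rw [if_pos (Finset.mem_range.mp hi)]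
    rw [hx (kk j), dif_pos ⟨j, rfl⟩, hchoose, htrunc, hhump, abs_of_nonneg (by positivity)]
  -- past `kk j`, `x` lives only on later columns, where row `nn j` vanishes
  have hrow_zero : ∀ i ∉ Finset.range (kk j + 1), A (nn j) i (x i) = 0 := by
    intro i hi
    by_cases hir : i ∈ Set.range kk
    · obtain ⟨l, rfl⟩ := hir
      have hjl : j < l := hkk.lt_iff_lt.mp (by simpa [Nat.lt_succ_iff] using hi)
      rw [hvanish j l hjl, LinearMap.zero_apply]
    · rw [hx_off i hir, map_zero]
  have hy_sub : y - S = A (nn j) (kk j) (x (kk j)) := by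
    rw [tendsto_nhds_unique hy (hasSum_sum_of_ne_finset_zero hrow_zero).tendsto_sum_nat,
      Finset.sum_range_succ, add_sub_cancel_left]
  calc (j : ℝ) + 1 = ‖y - S‖ - ‖S‖ := by rw [hy_sub, hhump_j]; ring
    _ ≤ ‖y‖ := by linarith [norm_sub_le y S]

theorem stmt11_general {X Y : Type*} [NormedAddCommGroup X] [NormedSpace ℝ X]
    [NormedAddCommGroup Y] [NormedSpace ℝ Y]
    (I : Set (Set ℕ))
    (hI_sub : ∀ S T : Set ℕ, S ∈ I → T ⊆ S → T ∈ I)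
    (hI_tall : ∀ S : Set ℕ, S.Infinite → ∃ T : Set ℕ, T ⊆ S ∧ T.Infinite ∧ T ∈ I)
    (A : ℕ → ℕ → X →ₗ[ℝ] Y)
    (hA : ∀ x : ℕ → X, {n | x n ≠ 0} ∈ I → ∃ y : ℕ → Y,
      (∀ n, Tendsto (fun m => ∑ k ∈ Finset.range m, A n k (x k)) atTop (nhds (y n))) ∧
      ∃ r : ℝ, ∀ n, ‖y n‖ ≤ r) :
    ∃ k₁ : ℕ, ∀ n : ℕ, ∀ k, k₁ ≤ k → A n k = 0 := by
  by_contra hA_cols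
  have hcols : {k | ∃ n, A n k ≠ 0}.Infinite := fun hfin => by
    obtain ⟨b, hb⟩ := hfin.bddAbove
    refine hA_cols ⟨b + 1, fun n k hk => by_contra fun h => ?_⟩
    have := hb ⟨n, h⟩
    omega
  obtain ⟨T, hT_cols, hT, hTI⟩ := hI_tall _ hcols
  have hT_supp : ∀ x : ℕ → X, (∀ k ∉ T, x k = 0) → {n | x n ≠ 0} ∈ I := fun x hx =>
    hI_sub T _ hTI fun k hk => by_contra fun hkT => hk (hx k hkT)
  have hrows : ∀ n, {k | k ∈ T ∧ A n k ≠ 0}.Finite := fun n =>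
    finite_setOf_mem_and_ne_zero_of_tendsto fun x hx =>
      let ⟨y, hy, _⟩ := hA x (hT_supp x hx)
      ⟨y n, hy n⟩
  obtain ⟨kk, nn, hkk, hkkT, hne, hvanish⟩ := exists_strictMono_diagonal hT hT_cols hrows
  obtain ⟨x, hx_off, hx_big⟩ :=
    exists_gliding_hump hkk hne fun j l hjl => not_not.mp (hvanish j l hjl)
  obtain ⟨y, hy, r, hr⟩ :=
    hA x <| hT_supp x fun k hk => hx_off k fun ⟨j, hj⟩ => hk (hj ▸ hkkT j)
  obtain ⟨j, hj⟩ := exists_nat_gt r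
  linarith [hx_big j _ (hy (nn j)), hr (nn j)]

/-- If `I` is a tall ideal and `A` maps every `X`-valued sequence supported on a set of `I`
to a well-defined bounded `Y`-valued sequence, then all but finitely many columns of `A`
vanish identically. -/
theorem stmt11 {X Y : Type*} [NormedAddCommGroup X] [NormedSpace ℝ X] [CompleteSpace X]
    [NormedAddCommGroup Y] [NormedSpace ℝ Y] [CompleteSpace Y]
    (I : Set (Set ℕ))
    (hI_sub : ∀ S T : Set ℕ, S ∈ I → T ⊆ S → T ∈ I)
    (hI_union : ∀ S T : Set ℕ, S ∈ I → T ∈ I → S ∪ T ∈ I)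
    (hI_fin : ∀ S : Set ℕ, S.Finite → S ∈ I)
    (hI_proper : Set.univ ∉ I)
    (hI_tall : ∀ S : Set ℕ, S.Infinite → ∃ T : Set ℕ, T ⊆ S ∧ T.Infinite ∧ T ∈ I)
    (A : ℕ → ℕ → X →ₗ[ℝ] Y)
    (hA : ∀ x : ℕ → X, {n | x n ≠ 0} ∈ I → ∃ y : ℕ → Y,
      (∀ n, Tendsto (fun m => ∑ k ∈ Finset.range m, A n k (x k)) atTop (nhds (y n))) ∧
      ∃ r : ℝ, ∀ n, ‖y n‖ ≤ r) :
    ∃ k₁ : ℕ, ∀ n : ℕ, ∀ k, k₁ ≤ k → A n k = 0 :=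
  stmt11_general I hI_sub hI_tall A hA
end

section
/- Characterization of (c(X,I), c₀^b(Y,J)) for tall I: Let X, Y be Banach spaces and I, J ideals on ℕ with I tall. A matrix A = (A_{n,k}) of linear operators in L(X,Y) maps every I-convergent X-valued sequence to a bounded Y-valued sequence that J-converges to 0 if and only if there exists k₁ ∈ ℕ such that: (B1) A_{n,k} = 0 for all n and all k ≥ k₁; (B2) sup_n ‖A_{n,k} x‖ < ∞ for all x ∈ X and k < k₁; (B3) J-lim_n A_{n,k} x = 0 for all x ∈ X and k < k₁. -/
/-!
Sufficiency is immediate: the row sums are finite sums of `k₁` columns, each bounded and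
`J`-null, and `J`-null sequences are those tending to `0` along the dual filter of `J`.

For necessity, testing `A` on sequences supported at a single column gives (B2) and (B3). If
infinitely many columns were nonzero, tallness would give an infinite set `S ∈ I` of them, and
every sequence supported on `S` is `I`-null, so `A` would have to map it to a bounded sequence. A
gliding hump rules this out. If some row has infinitely many nonzero entries in `S`, entries of
norm one make that row series diverge. Otherwise pick columns `κ i ∈ S`, rows `ν i` and vectors
`u i` inductively so that row `ν j` vanishes at `κ i` for `j < i` (each row is finitely supported
on `S`) and `‖A (ν i) (κ i) (u i)‖` exceeds `i + 1` plus the earlier terms of row `ν i`; for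
`x = u` on the columns `κ i` the row sum at `ν i` then has norm at least `i + 1`.
-/

open Filter Finset Topology

theorem exists_seq_of_forall_prefix_exists {α : Type*} (P : (i : ℕ) → (Fin i → α) → α → Prop)
    (h : ∀ i (s : Fin i → α), ∃ a, P i s a) : ∃ g : ℕ → α, ∀ i, P i (fun j => g j) (g i) := by
  choose next hnext using h
  let g : ℕ → α := Nat.strongRec fun i prev => next i fun j => prev j j.isLt
  refine ⟨g, fun i => ?_⟩
  rw [show g i = next i fun j => g j from Nat.strongRec_eq _ i]
  exact hnext _ _

theorem exists_norm_sum_le_of_forall_exists {ι α E : Type*} [SeminormedAddCommGroup E]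
    (s : Finset ι) (f : ι → α → E) (h : ∀ k ∈ s, ∃ C, ∀ n, ‖f k n‖ ≤ C) :
    ∃ C, ∀ n, ‖∑ k ∈ s, f k n‖ ≤ C := by
  choose! C hC using h
  exact ⟨∑ k ∈ s, C k, fun n => (norm_sum_le _ _).trans (sum_le_sum fun k hk => hC k hk n)⟩

theorem tendsto_comk_nhds_zero_iff {α E : Type*} [SeminormedAddGroup E] {p : Set α → Prop}
    {he hmono hunion} {y : α → E} :
    Tendsto y (comk p he hmono hunion) (𝓝 0) ↔ ∀ ε : ℝ, 0 < ε → p {n | ε ≤ ‖y n‖} := by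
  simp only [NormedAddGroup.tendsto_nhds_zero, Filter.Eventually, mem_comk, Set.compl_ofPred,
    not_lt]

theorem setOf_le_norm_sub_zero_mem_of_support_subset {E : Type*} [SeminormedAddGroup E]
    {I : Set (Set ℕ)} (hI_sub : ∀ S S' : Set ℕ, S ∈ I → S' ⊆ S → S' ∈ I) {S : Set ℕ} (hS : S ∈ I)
    {x : ℕ → E} (hx : ∀ k ∉ S, x k = 0) (ε : ℝ) (hε : 0 < ε) : {n | ε ≤ ‖x n - 0‖} ∈ I :=
  hI_sub S _ hS fun n hn => by
    by_contra h
    simp [hx n h] at hn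
    linarith

section

variable {X Y : Type*} [AddCommGroup X] [Module ℝ X] [NormedAddCommGroup Y] [NormedSpace ℝ Y]

theorem exists_norm_apply_eq_of_ne_zero {f : X →ₗ[ℝ] Y} (hf : f ≠ 0) {c : ℝ} (hc : 0 ≤ c) :
    ∃ u, ‖f u‖ = c := by
  obtain ⟨u, hu⟩ : ∃ u, f u ≠ 0 := by
    by_contra! h
    exact hf (LinearMap.ext h)
  refine ⟨(c / ‖f u‖) • u, ?_⟩
  rw [map_smul, norm_smul, Real.norm_of_nonneg (by positivity),
    div_mul_cancel₀ _ (norm_ne_zero_iff.2 hu)]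

variable (A : ℕ → ℕ → X →ₗ[ℝ] Y)

def HasBoundedRowSums (x : ℕ → X) : Prop :=
  ∃ y : ℕ → Y, (∀ n, Tendsto (fun m => ∑ k ∈ range m, A n k (x k)) atTop (𝓝 (y n))) ∧
    ∃ r, ∀ n, ‖y n‖ ≤ r

theorem tendsto_rowSum_single (n k : ℕ) (v : X) :
    Tendsto (fun m => ∑ j ∈ range m, A n j ((Pi.single k v : ℕ → X) j)) atTop (𝓝 (A n k v)) := by
  simpa using (hasSum_single k (f := fun j => A n j ((Pi.single k v : ℕ → X) j))
    fun j hj => by simp [hj]).tendsto_sum_nat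

variable {A} {S : Set ℕ}

theorem exists_not_hasBoundedRowSums_of_infinite_row {n : ℕ}
    (hR : {k ∈ S | A n k ≠ 0}.Infinite) :
    ∃ x : ℕ → X, (∀ k ∉ S, x k = 0) ∧ ¬ HasBoundedRowSums A x := by
  choose! u hu using fun k (hk : k ∈ {k ∈ S | A n k ≠ 0}) =>
    exists_norm_apply_eq_of_ne_zero hk.2 zero_le_one
  refine ⟨{k ∈ S | A n k ≠ 0}.indicator u, fun k hk => Set.indicator_of_notMem (fun h => hk h.1) _,
    fun ⟨y, hy, _⟩ => ?_⟩
  obtain ⟨M, hM⟩ := eventually_atTop.1 <|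
    NormedAddGroup.tendsto_nhds_zero.1 (tendsto_zero_of_tendsto_sum_range (hy n)) 1 one_pos
  obtain ⟨k, hk, hMk⟩ := hR.exists_gt M
  have := hM k hMk.le
  rw [Set.indicator_of_mem hk, hu k hk] at this
  exact this.false

theorem exists_gliding_hump_s13 (hS : S.Infinite) (hA : ∀ k ∈ S, ∃ n, A n k ≠ 0)
    (hrow : ∀ n, {k ∈ S | A n k ≠ 0}.Finite) :
    ∃ (κ ν : ℕ → ℕ) (u : ℕ → X), (∀ i, κ i ∈ S) ∧ (∀ j i, j < i → A (ν j) (κ i) = 0) ∧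
      ∀ i : ℕ, (i : ℝ) + 1 + ∑ j ∈ range i, ‖A (ν i) (κ j) (u j)‖ ≤ ‖A (ν i) (κ i) (u i)‖ := by
  obtain ⟨g, hg⟩ := exists_seq_of_forall_prefix_exists
    (fun i (s : Fin i → ℕ × ℕ × X) (t : ℕ × ℕ × X) => t.1 ∈ S ∧ (∀ j, A (s j).2.1 t.1 = 0) ∧
      (i : ℝ) + 1 + ∑ j, ‖A t.2.1 (s j).1 (s j).2.2‖ ≤ ‖A t.2.1 t.1 t.2.2‖) fun i s => by
    obtain ⟨k, hkS, hk⟩ := (hS.sdiff (Set.finite_iUnion fun j => hrow (s j).2.1)).nonempty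
    obtain ⟨n, hn⟩ := hA k hkS
    obtain ⟨u, hu⟩ := exists_norm_apply_eq_of_ne_zero hn
      (c := i + 1 + ∑ j, ‖A n (s j).1 (s j).2.2‖) (by positivity)
    refine ⟨(k, n, u), hkS, fun j => ?_, hu.ge⟩
    by_contra h
    exact hk (Set.mem_iUnion.2 ⟨j, hkS, h⟩)
  refine ⟨fun i => (g i).1, fun i => (g i).2.1, fun i => (g i).2.2, fun i => (hg i).1,
    fun j i hji => (hg i).2.1 ⟨j, hji⟩, fun i => ?_⟩
  simpa only [Fin.sum_univ_eq_sum_range (fun j => ‖A (g i).2.1 (g j).1 (g j).2.2‖)] using (hg i).2.2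

theorem exists_not_hasBoundedRowSums_of_finite_rows (hS : S.Infinite)
    (hA : ∀ k ∈ S, ∃ n, A n k ≠ 0) (hrow : ∀ n, {k ∈ S | A n k ≠ 0}.Finite) :
    ∃ x : ℕ → X, (∀ k ∉ S, x k = 0) ∧ ¬ HasBoundedRowSums A x := by
  obtain ⟨κ, ν, u, hκS, hzero, hbig⟩ := exists_gliding_hump_s13 hS hA hrow
  have hκ : Function.Injective κ := by
    have hne : ∀ j i, j < i → κ j ≠ κ i := fun j i hji h => by
      have := hbig j
      rw [h, hzero j i hji, LinearMap.zero_apply, norm_zero] at this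
      linarith [sum_nonneg fun l (_ : l ∈ range j) => norm_nonneg (A (ν j) (κ l) (u l))]
    intro i j h
    by_contra hij
    rcases lt_or_gt_of_ne hij with hlt | hlt
    exacts [hne i j hlt h, hne j i hlt h.symm]
  refine ⟨Function.extend κ u 0, fun k hk => Function.extend_apply' _ _ _ fun ⟨i, hi⟩ =>
    hk (hi ▸ hκS i), fun ⟨y, hy, r, hr⟩ => ?_⟩
  have hyν : ∀ i, y (ν i) = ∑ j ∈ range (i + 1), A (ν i) (κ j) (u j) := fun i => by
    have : HasSum (fun k => A (ν i) k (Function.extend κ u 0 k))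
        (∑ k ∈ (range (i + 1)).image κ, A (ν i) k (Function.extend κ u 0 k)) := by
      refine hasSum_sum_of_ne_finset_zero fun k hk => ?_
      by_cases hkκ : ∃ j, κ j = k
      · obtain ⟨j, rfl⟩ := hkκ
        rw [hzero i j (by simpa [hκ.eq_iff] using hk), LinearMap.zero_apply]
      · rw [Function.extend_apply' _ _ _ hkκ, Pi.zero_apply, map_zero]
    rw [tendsto_nhds_unique (hy (ν i)) this.tendsto_sum_nat, sum_image hκ.injOn]
    simp only [hκ.extend_apply]
  set i := ⌈r⌉₊
  have hlow : (i : ℝ) + 1 ≤ ‖y (ν i)‖ := by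
    rw [hyν, sum_range_succ]
    linarith [hbig i, norm_le_add_norm_add' (∑ j ∈ range i, A (ν i) (κ j) (u j))
      (A (ν i) (κ i) (u i)), norm_sum_le (range i) fun j => A (ν i) (κ j) (u j)]
  linarith [hr (ν i), Nat.le_ceil r]

theorem finite_of_forall_hasBoundedRowSums (hA : ∀ k ∈ S, ∃ n, A n k ≠ 0)
    (h : ∀ x : ℕ → X, (∀ k ∉ S, x k = 0) → HasBoundedRowSums A x) : S.Finite := by
  by_contra hS
  obtain ⟨x, hxS, hx⟩ : ∃ x : ℕ → X, (∀ k ∉ S, x k = 0) ∧ ¬ HasBoundedRowSums A x := by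
    by_cases hrow : ∀ n, {k ∈ S | A n k ≠ 0}.Finite
    · exact exists_not_hasBoundedRowSums_of_finite_rows hS hA hrow
    · obtain ⟨n, hn⟩ := not_forall.1 hrow
      exact exists_not_hasBoundedRowSums_of_infinite_row hn
  exact hx (h x hxS)

theorem exists_bounded_null_rowSums_of_finite_columns {J : Set (Set ℕ)}
    (hJ_sub : ∀ S S' : Set ℕ, S ∈ J → S' ⊆ S → S' ∈ J)
    (hJ_union : ∀ S S' : Set ℕ, S ∈ J → S' ∈ J → S ∪ S' ∈ J) (hJ_empty : ∅ ∈ J) {k₁ : ℕ}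
    (hB1 : ∀ n k, k₁ ≤ k → A n k = 0) (hB2 : ∀ v k, k < k₁ → ∃ C : ℝ, ∀ n, ‖A n k v‖ ≤ C)
    (hB3 : ∀ v k, k < k₁ → ∀ ε : ℝ, 0 < ε → {n | ε ≤ ‖A n k v‖} ∈ J) (x : ℕ → X) :
    ∃ y : ℕ → Y, (∀ n, Tendsto (fun m => ∑ k ∈ range m, A n k (x k)) atTop (𝓝 (y n))) ∧
      (∃ r : ℝ, ∀ n, ‖y n‖ ≤ r) ∧ ∀ ε : ℝ, 0 < ε → {n | ε ≤ ‖y n‖} ∈ J := by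
  let J_dual : Filter ℕ := comk (· ∈ J) hJ_empty (fun S hS S' hS' => hJ_sub S S' hS hS')
    fun S hS S' hS' => hJ_union S S' hS hS'
  have hJ_null (y : ℕ → Y) :
      Tendsto y J_dual (𝓝 0) ↔ ∀ ε : ℝ, 0 < ε → {n | ε ≤ ‖y n‖} ∈ J :=
    tendsto_comk_nhds_zero_iff
  have hsum (n : ℕ) : HasSum (fun k => A n k (x k)) (∑ k ∈ range k₁, A n k (x k)) :=
    hasSum_sum_of_ne_finset_zero fun k hk => by
      rw [hB1 n k (by simpa using hk), LinearMap.zero_apply]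
  refine ⟨_, fun n => (hsum n).tendsto_sum_nat,
    exists_norm_sum_le_of_forall_exists _ (fun k n => A n k (x k))
      fun k hk => hB2 (x k) k (mem_range.1 hk), (hJ_null _).1 ?_⟩
  simpa using tendsto_finsetSum _ fun k hk => (hJ_null _).2 (hB3 (x k) k (mem_range.1 hk))

end

theorem stmt13_general {X Y : Type*} [NormedAddCommGroup X] [NormedSpace ℝ X]
    [NormedAddCommGroup Y] [NormedSpace ℝ Y]
    (I J : Set (Set ℕ))
    (hI_sub : ∀ S S' : Set ℕ, S ∈ I → S' ⊆ S → S' ∈ I)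
    (hI_fin : ∀ S : Set ℕ, S.Finite → S ∈ I)
    (hI_tall : ∀ S : Set ℕ, S.Infinite → ∃ S' : Set ℕ, S' ⊆ S ∧ S'.Infinite ∧ S' ∈ I)
    (hJ_sub : ∀ S S' : Set ℕ, S ∈ J → S' ⊆ S → S' ∈ J)
    (hJ_union : ∀ S S' : Set ℕ, S ∈ J → S' ∈ J → S ∪ S' ∈ J)
    (hJ_fin : ∀ S : Set ℕ, S.Finite → S ∈ J)
    (A : ℕ → ℕ → X →ₗ[ℝ] Y) :
    (∀ x : ℕ → X, (∃ η : X, ∀ ε : ℝ, 0 < ε → {n | ε ≤ ‖x n - η‖} ∈ I) →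
        ∃ y : ℕ → Y,
          (∀ n, Tendsto (fun m => ∑ k ∈ Finset.range m, A n k (x k)) atTop (nhds (y n))) ∧
          (∃ r : ℝ, ∀ n, ‖y n‖ ≤ r) ∧
          (∀ ε : ℝ, 0 < ε → {n | ε ≤ ‖y n‖} ∈ J)) ↔
      ∃ k₁ : ℕ,
        (∀ n k, k₁ ≤ k → A n k = 0) ∧
        (∀ x : X, ∀ k, k < k₁ → ∃ C : ℝ, ∀ n, ‖A n k x‖ ≤ C) ∧
        (∀ x : X, ∀ k, k < k₁ → ∀ ε : ℝ, 0 < ε → {n | ε ≤ ‖A n k x‖} ∈ J) := by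
  constructor
  · intro hyp
    have hI_null {S x} (hS : S ∈ I) (hx : ∀ k ∉ S, x k = 0) :=
      hyp x ⟨0, setOf_le_norm_sub_zero_mem_of_support_subset hI_sub hS hx⟩
    have hcol (k : ℕ) (v : X) :
        (∃ C : ℝ, ∀ n, ‖A n k v‖ ≤ C) ∧ ∀ ε : ℝ, 0 < ε → {n | ε ≤ ‖A n k v‖} ∈ J := by
      obtain ⟨y, hy, hbdd, hnull⟩ :=
        hI_null (x := Pi.single k v) (hI_fin _ (Set.finite_singleton k)) fun j hj => by simp_all
      obtain rfl : y = fun n => A n k v :=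
        funext fun n => tendsto_nhds_unique (hy n) (tendsto_rowSum_single A n k v)
      exact ⟨hbdd, hnull⟩
    have hfin : {k | ∃ n, A n k ≠ 0}.Finite := by
      by_contra hinf
      obtain ⟨S, hSsub, hSinf, hSI⟩ := hI_tall _ hinf
      refine hSinf (finite_of_forall_hasBoundedRowSums (fun k hk => hSsub hk) fun x hx => ?_)
      obtain ⟨y, hy, hbdd, -⟩ := hI_null hSI hx
      exact ⟨y, hy, hbdd⟩
    obtain ⟨b, hb⟩ := hfin.bddAbove
    refine ⟨b + 1, fun n k hk => ?_, fun v k _ => (hcol k v).1, fun v k _ => (hcol k v).2⟩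
    by_contra h
    exact absurd (hb ⟨n, h⟩) (by omega)
  · rintro ⟨k₁, hB1, hB2, hB3⟩ x -
    exact exists_bounded_null_rowSums_of_finite_columns hJ_sub hJ_union
      (hJ_fin ∅ Set.finite_empty) hB1 hB2 hB3 x

/-- Characterization of the matrix class `(c(X,I), c₀ᵇ(Y,J))` for a tall ideal `I`:
`A` maps every `I`-convergent sequence to a well-defined bounded sequence `J`-converging
to `0` if and only if there is `k₁` such that (B1) `A n k = 0` for `k ≥ k₁`,
(B2) `sup_n ‖A n k x‖ < ∞` for `k < k₁`, and (B3) `J`-`lim_n A n k x = 0` for `k < k₁`. -/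
theorem stmt13 {X Y : Type*} [NormedAddCommGroup X] [NormedSpace ℝ X] [CompleteSpace X]
    [NormedAddCommGroup Y] [NormedSpace ℝ Y] [CompleteSpace Y]
    (I J : Set (Set ℕ))
    (hI_sub : ∀ S S' : Set ℕ, S ∈ I → S' ⊆ S → S' ∈ I)
    (hI_union : ∀ S S' : Set ℕ, S ∈ I → S' ∈ I → S ∪ S' ∈ I)
    (hI_fin : ∀ S : Set ℕ, S.Finite → S ∈ I)
    (hI_proper : Set.univ ∉ I)
    (hI_tall : ∀ S : Set ℕ, S.Infinite → ∃ S' : Set ℕ, S' ⊆ S ∧ S'.Infinite ∧ S' ∈ I)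
    (hJ_sub : ∀ S S' : Set ℕ, S ∈ J → S' ⊆ S → S' ∈ J)
    (hJ_union : ∀ S S' : Set ℕ, S ∈ J → S' ∈ J → S ∪ S' ∈ J)
    (hJ_fin : ∀ S : Set ℕ, S.Finite → S ∈ J)
    (hJ_proper : Set.univ ∉ J)
    (A : ℕ → ℕ → X →ₗ[ℝ] Y) :
    (∀ x : ℕ → X, (∃ η : X, ∀ ε : ℝ, 0 < ε → {n | ε ≤ ‖x n - η‖} ∈ I) →
        ∃ y : ℕ → Y,
          (∀ n, Tendsto (fun m => ∑ k ∈ Finset.range m, A n k (x k)) atTop (nhds (y n))) ∧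
          (∃ r : ℝ, ∀ n, ‖y n‖ ≤ r) ∧
          (∀ ε : ℝ, 0 < ε → {n | ε ≤ ‖y n‖} ∈ J)) ↔
      ∃ k₁ : ℕ,
        (∀ n k, k₁ ≤ k → A n k = 0) ∧
        (∀ x : X, ∀ k, k < k₁ → ∃ C : ℝ, ∀ n, ‖A n k x‖ ≤ C) ∧
        (∀ x : X, ∀ k, k < k₁ → ∀ ε : ℝ, 0 < ε → {n | ε ≤ ‖A n k x‖} ∈ J) :=
  stmt13_general I J hI_sub hI_fin hI_tall hJ_sub hJ_union hJ_fin A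
end

section
/- Ideal version of the Lorentz–Macphail theorem: Let X, Y be Banach spaces, (T_n) a sequence of linear operators in L(X,Y), and (M_n) a decreasing sequence of closed linear subspaces of X such that each T_n is bounded on M_n. Let J be a strongly selective ideal on ℕ, and suppose that for every x ∈ X the sequence (T_n x) is J-bounded. Then there exist n₀ ∈ ℕ and J* ∈ J^⋆ (the dual filter) such that T_n is bounded on M_{n₀} for all n ∈ J*. -/
/-!
Let `U n₀` be the set of indices `n` for which `T n` is unbounded on `M n₀`. If some `U n₀`
lies in `J`, its complement is the required `J*`. Otherwise the sets `U n₀` form a decreasing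
sequence of `J`-positive sets, and strong selectivity yields a `J`-positive set
`{k 0 < k 1 < …}` with `T (k (n + 1))` unbounded on `M (k n)`. The classical Lorentz–Macphail
argument then gives a single `x` with `‖T (k n) x‖ → ∞`, so up to a finite set `range k` is
contained in the set `{n | r ≤ ‖T n x‖} ∈ J` witnessing the `J`-boundedness of `(T n x)`,
and would lie in `J`.
-/

open Filter

namespace LinearMap

variable {X Y : Type*} [NormedAddCommGroup X] [NormedSpace ℝ X]
  [NormedAddCommGroup Y] [NormedSpace ℝ Y]

def BoundedOn (T : X →ₗ[ℝ] Y) (M : Submodule ℝ X) : Prop :=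
  ∃ C : ℝ, ∀ x ∈ M, ‖T x‖ ≤ C * ‖x‖

theorem BoundedOn.mono {T : X →ₗ[ℝ] Y} {M M' : Submodule ℝ X} (h : T.BoundedOn M)
    (hM : M' ≤ M) : T.BoundedOn M' :=
  let ⟨C, hC⟩ := h
  ⟨C, fun x hx => hC x (hM hx)⟩

theorem BoundedOn.exists_nonneg {T : X →ₗ[ℝ] Y} {M : Submodule ℝ X} (h : T.BoundedOn M) :
    ∃ C, 0 ≤ C ∧ ∀ x ∈ M, ‖T x‖ ≤ C * ‖x‖ := by
  obtain ⟨C, hC⟩ := h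
  exact ⟨max C 0, le_max_right _ _, fun x hx =>
    (hC x hx).trans (by gcongr; exact le_max_left _ _)⟩

theorem exists_norm_le_le_norm_apply_of_not_boundedOn {T : X →ₗ[ℝ] Y} {M : Submodule ℝ X}
    (h : ¬ T.BoundedOn M) (R : ℝ) {ε : ℝ} (hε : 0 < ε) :
    ∃ w ∈ M, ‖w‖ ≤ ε ∧ R ≤ ‖T w‖ := by
  obtain ⟨y, hyM, hy⟩ : ∃ y ∈ M, max R 0 / ε * ‖y‖ < ‖T y‖ := by
    simp only [BoundedOn, not_exists, not_forall, not_le, exists_prop] at h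
    exact h _
  have hy0 : 0 < ‖y‖ := by
    refine (norm_nonneg y).lt_of_ne' fun h0 => ?_
    simp [norm_eq_zero.mp h0] at hy
  refine ⟨(ε / ‖y‖) • y, M.smul_mem _ hyM, ?_, ?_⟩
  · rw [norm_smul, Real.norm_of_nonneg (by positivity), div_mul_cancel₀ _ hy0.ne']
  · rw [map_smul, norm_smul, Real.norm_of_nonneg (by positivity)]
    calc R ≤ max R 0 := le_max_left _ _
      _ = ε / ‖y‖ * (max R 0 / ε * ‖y‖) := by field_simp
      _ ≤ ε / ‖y‖ * ‖T y‖ := by gcongr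

end LinearMap

theorem exists_seq_forall_sum_range {X : Type*} [AddCommMonoid X] {P : ℕ → X → X → Prop}
    (h : ∀ n s, ∃ w, P n s w) :
    ∃ v : ℕ → X, ∀ n, P n (∑ m ∈ Finset.range n, v m) (v n) := by
  choose g hg using h
  let s : ℕ → X := fun n => Nat.rec 0 (fun m p => p + g m p) n
  have hs : ∀ n, s n = ∑ m ∈ Finset.range n, g m (s m) := by
    intro n
    induction n with
    | zero => rfl
    | succ n ih => rw [Finset.sum_range_succ, ← ih]
  exact ⟨fun n => g n (s n), fun n => hs n ▸ hg n (s n)⟩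

section Series

variable {X : Type*} [NormedAddCommGroup X]

theorem tsum_nat_add_mem_of_antitone [NormedSpace ℝ X] {N : ℕ → Submodule ℝ X}
    (hN_closed : ∀ n, IsClosed (N n : Set X)) (hN_anti : Antitone N) {v : ℕ → X}
    (hv : Summable v) (hvN : ∀ n, v n ∈ N n) (n : ℕ) : ∑' m, v (m + n) ∈ N n :=
  (hN_closed n).mem_of_tendsto ((summable_nat_add_iff n).2 hv).hasSum.tendsto_sum_nat
    (Eventually.of_forall fun _ => Submodule.sum_mem _ fun m _ =>
      hN_anti (Nat.le_add_left n m) (hvN (m + n)))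

theorem norm_tsum_nat_add_le_of_norm_le_geometric {v : ℕ → X}
    (hv : ∀ n, ‖v n‖ ≤ (1 / 2 : ℝ) ^ n) (n : ℕ) :
    ‖∑' m, v (m + n)‖ ≤ 2 * (1 / 2 : ℝ) ^ n := by
  have hgeom : HasSum (fun m => (1 / 2 : ℝ) ^ (m + n)) (2 * (1 / 2 : ℝ) ^ n) := by
    simpa only [pow_add, mul_comm] using hasSum_geometric_two.mul_left ((1 / 2 : ℝ) ^ n)
  exact tsum_of_norm_bounded hgeom fun m => hv (m + n)

end Series

open LinearMap in
/-- The classical Lorentz–Macphail theorem (the case `J = Fin`). -/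
theorem exists_tendsto_norm_apply_atTop_of_not_boundedOn {X Y : Type*}
    [NormedAddCommGroup X] [NormedSpace ℝ X] [CompleteSpace X]
    [NormedAddCommGroup Y] [NormedSpace ℝ Y]
    (S : ℕ → X →ₗ[ℝ] Y) (N : ℕ → Submodule ℝ X)
    (hN_closed : ∀ n, IsClosed (N n : Set X)) (hN_anti : Antitone N)
    (hbdd : ∀ n, (S n).BoundedOn (N n)) (hunbdd : ∀ n, ¬ (S (n + 1)).BoundedOn (N n)) :
    ∃ x, Tendsto (fun n => ‖S n x‖) atTop atTop := by
  choose C hC_nonneg hC using fun n => (hbdd n).exists_nonneg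
  -- `v n` is chosen so large under `S (n + 1)` that it beats both the earlier terms and,
  -- since the tail lies in `N (n + 1)`, the whole tail of the series.
  obtain ⟨v, hv⟩ := exists_seq_forall_sum_range fun n s =>
    exists_norm_le_le_norm_apply_of_not_boundedOn (hunbdd n)
      (n + ‖S (n + 1) s‖ + C (n + 1) * (2 * (1 / 2) ^ (n + 1)))
      (pow_pos (by norm_num : (0 : ℝ) < 1 / 2) n)
  choose hvN hv_norm hv_large using hv
  have hsum : Summable v := Summable.of_norm_bounded summable_geometric_two hv_norm
  refine ⟨∑' m, v m, (tendsto_add_atTop_iff_nat 1).1 <|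
    tendsto_atTop_mono (fun n => ?_) tendsto_natCast_atTop_atTop⟩
  set s := ∑ m ∈ Finset.range n, v m
  set t := ∑' m, v (m + (n + 1))
  set x := ∑' m, v m with hx
  have hsplit : x = s + v n + t := by
    rw [hx, ← hsum.sum_add_tsum_nat_add (n + 1), Finset.sum_range_succ]
  have ht : ‖S (n + 1) t‖ ≤ C (n + 1) * (2 * (1 / 2) ^ (n + 1)) :=
    (hC (n + 1) t (tsum_nat_add_mem_of_antitone hN_closed hN_anti hsum hvN (n + 1))).trans
      (by gcongr; exacts [hC_nonneg _, norm_tsum_nat_add_le_of_norm_le_geometric hv_norm _])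
  have htri :
      ‖S (n + 1) (v n)‖ ≤ ‖S (n + 1) x‖ + ‖S (n + 1) s‖ + ‖S (n + 1) t‖ := by
    have hv_eq : S (n + 1) (v n) = S (n + 1) x - S (n + 1) s - S (n + 1) t := by
      rw [hsplit, map_add, map_add]; abel
    rw [hv_eq]
    exact (norm_sub_le _ _).trans (by gcongr; exact norm_sub_le _ _)
  linarith [hv_large n]

theorem range_mem_of_eventually_mem {J : Set (Set ℕ)}
    (hJ_sub : ∀ S S' : Set ℕ, S ∈ J → S' ⊆ S → S' ∈ J)
    (hJ_union : ∀ S S' : Set ℕ, S ∈ J → S' ∈ J → S ∪ S' ∈ J)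
    (hJ_fin : ∀ S : Set ℕ, S.Finite → S ∈ J) {k : ℕ → ℕ} {A : Set ℕ} (hA : A ∈ J)
    (hk : ∀ᶠ n in atTop, k n ∈ A) : Set.range k ∈ J := by
  obtain ⟨N, hN⟩ := eventually_atTop.1 hk
  refine hJ_sub _ _ (hJ_union _ _ hA (hJ_fin _ ((Set.finite_Iio N).image k))) ?_
  rintro _ ⟨n, rfl⟩
  rcases lt_or_ge n N with h | h
  · exact Or.inr ⟨n, h, rfl⟩
  · exact Or.inl (hN n h)

theorem stmt14_general {X Y : Type*} [NormedAddCommGroup X] [NormedSpace ℝ X] [CompleteSpace X]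
    [NormedAddCommGroup Y] [NormedSpace ℝ Y]
    (J : Set (Set ℕ))
    (hJ_sub : ∀ S S' : Set ℕ, S ∈ J → S' ⊆ S → S' ∈ J)
    (hJ_union : ∀ S S' : Set ℕ, S ∈ J → S' ∈ J → S ∪ S' ∈ J)
    (hJ_fin : ∀ S : Set ℕ, S.Finite → S ∈ J)
    (hJ_sel : ∀ S : ℕ → Set ℕ, (∀ n, S (n + 1) ⊆ S n) → (∀ n, S n ∉ J) →
      ∃ x : ℕ → ℕ, StrictMono x ∧ Set.range x ∉ J ∧ ∀ n, x (n + 1) ∈ S (x n))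
    (T : ℕ → X →ₗ[ℝ] Y)
    (M : ℕ → Submodule ℝ X)
    (hM_closed : ∀ n, IsClosed (M n : Set X))
    (hM_dec : ∀ n, M (n + 1) ≤ M n)
    (hTM : ∀ n, ∃ C : ℝ, ∀ x ∈ M n, ‖T n x‖ ≤ C * ‖x‖)
    (hbd : ∀ x : X, ∃ r : ℝ, {n | r ≤ ‖T n x‖} ∈ J) :
    ∃ n₀ : ℕ, ∃ Js : Set ℕ, Jsᶜ ∈ J ∧
      ∀ n ∈ Js, ∃ C : ℝ, ∀ x ∈ M n₀, ‖T n x‖ ≤ C * ‖x‖ := by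
  let U : ℕ → Set ℕ := fun n₀ => {n | ¬ (T n).BoundedOn (M n₀)}
  by_cases hU : ∃ n₀, U n₀ ∈ J
  · obtain ⟨n₀, hn₀⟩ := hU
    exact ⟨n₀, (U n₀)ᶜ, by rwa [compl_compl], fun n hn => not_not.mp hn⟩
  push Not at hU
  have hU_dec : ∀ n, U (n + 1) ⊆ U n := fun n _ hm h => hm (h.mono (hM_dec n))
  obtain ⟨k, hk_mono, hk_range, hk_step⟩ := hJ_sel U hU_dec hU
  have hM_anti : Antitone M := antitone_nat_of_succ_le hM_dec
  obtain ⟨x, hx⟩ := exists_tendsto_norm_apply_atTop_of_not_boundedOn (fun n => T (k n))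
    (fun n => M (k n)) (fun n => hM_closed (k n)) (hM_anti.comp_monotone hk_mono.monotone)
    (fun n => hTM (k n)) hk_step
  obtain ⟨r, hr⟩ := hbd x
  exact absurd
    (range_mem_of_eventually_mem hJ_sub hJ_union hJ_fin hr (hx.eventually_ge_atTop r)) hk_range

/-- Ideal version of the Lorentz–Macphail theorem: if `J` is a strongly selective ideal,
`(M n)` is a decreasing sequence of closed subspaces with each `T n` bounded on `M n`, and
`(T n x)` is `J`-bounded for every `x`, then there are `n₀` and `J* ∈ J^⋆` such that `T n`
is bounded on `M n₀` for every `n ∈ J*`. -/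
theorem stmt14 {X Y : Type*} [NormedAddCommGroup X] [NormedSpace ℝ X] [CompleteSpace X]
    [NormedAddCommGroup Y] [NormedSpace ℝ Y] [CompleteSpace Y]
    (J : Set (Set ℕ))
    (hJ_sub : ∀ S S' : Set ℕ, S ∈ J → S' ⊆ S → S' ∈ J)
    (hJ_union : ∀ S S' : Set ℕ, S ∈ J → S' ∈ J → S ∪ S' ∈ J)
    (hJ_fin : ∀ S : Set ℕ, S.Finite → S ∈ J)
    (hJ_proper : Set.univ ∉ J)
    (hJ_sel : ∀ S : ℕ → Set ℕ, (∀ n, S (n + 1) ⊆ S n) → (∀ n, S n ∉ J) →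
      ∃ x : ℕ → ℕ, StrictMono x ∧ Set.range x ∉ J ∧ ∀ n, x (n + 1) ∈ S (x n))
    (T : ℕ → X →ₗ[ℝ] Y)
    (M : ℕ → Submodule ℝ X)
    (hM_closed : ∀ n, IsClosed (M n : Set X))
    (hM_dec : ∀ n, M (n + 1) ≤ M n)
    (hTM : ∀ n, ∃ C : ℝ, ∀ x ∈ M n, ‖T n x‖ ≤ C * ‖x‖)
    (hbd : ∀ x : X, ∃ r : ℝ, {n | r ≤ ‖T n x‖} ∈ J) :
    ∃ n₀ : ℕ, ∃ Js : Set ℕ, Jsᶜ ∈ J ∧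
      ∀ n ∈ Js, ∃ C : ℝ, ∀ x ∈ M n₀, ‖T n x‖ ≤ C * ‖x‖ :=
  stmt14_general J hJ_sub hJ_union hJ_fin hJ_sel T M hM_closed hM_dec hTM hbd
end

section
/- Let J be a countably generated ideal on ℕ and A = (A_{n,k}) a matrix of linear operators between Banach spaces X, Y satisfying: (a) lim_k ‖A_{n,≥k}‖ = 0 for every n (tails of group norms of each row vanish); (b) J-lim_n A_{n,k} x = 0 for every k ∈ ℕ and x ∈ X; and (c) J-limsup_n ‖A_{n,≥f(n)}‖ = ∞, where f(n) is any index with ‖A_{n,≥f(n)}‖ < ∞. Then there exists a sequence x with values in the unit sphere of X such that J-limsup_n ‖A_n x‖ = ∞. -/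
/-!
A gliding-hump argument. Let `L` be the filter dual to `J` (`S ∈ J ↔ Sᶜ ∈ L`); it is countably
generated because `J` is. By the uniform boundedness principle, each column `A_{n,k}` with
`f n ≤ k` is uniformly bounded for `L`-almost all `n`, so finitely many columns cannot carry the
infinite `J`-limsup: the tails `‖A_{n,≥K}‖` have infinite `J`-limsup for every fixed `K`.
Inductively choose rows `n_i → L`, block ends `K_i` and unit vectors on `[K_i, K_{i+1})` such that
the head `∑_{k<K_i} A_{n_i,k} x_k` is small (the columns tend to `0`), the block contributes more
than `i + 2` (a finite section of a large tail, with the ball replaced by the sphere because a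
convex function on a product of balls is maximal on the product of spheres), and the rest of the
row beyond `K_{i+1}` has group norm at most `1` (condition (a)). Then `‖A_{n_i} x‖ ≥ i`.
-/

open Filter ENNReal

/-- The group norm of a family `(T k : k ∈ E)` of operators. -/
noncomputable def gn {X Y : Type*} [NormedAddCommGroup X] [NormedAddCommGroup Y]
    (T : ℕ → X → Y) (E : Set ℕ) : ℝ≥0∞ :=
  ⨆ (F : Finset ℕ) (_ : (F : Set ℕ) ⊆ E) (x : ℕ → X) (_ : ∀ k, ‖x k‖ ≤ 1),
    (‖∑ k ∈ F, T k (x k)‖₊ : ℝ≥0∞)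

/-- The `J`-limit superior of an `ℝ≥0∞`-valued sequence. -/
noncomputable def jlimsup (J : Set (Set ℕ)) (y : ℕ → ℝ≥0∞) : ℝ≥0∞ :=
  sInf {r : ℝ≥0∞ | {n | r ≤ y n} ∈ J}

open Finset Metric Topology

section GroupNorm

variable {X Y : Type*} [NormedAddCommGroup X] [NormedAddCommGroup Y] (T : ℕ → X → Y)

theorem le_gn {E : Set ℕ} {F : Finset ℕ} (hF : (F : Set ℕ) ⊆ E) {x : ℕ → X}
    (hx : ∀ k, ‖x k‖ ≤ 1) : (‖∑ k ∈ F, T k (x k)‖₊ : ℝ≥0∞) ≤ gn T E :=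
  le_iSup₂_of_le F hF <| le_iSup₂_of_le (f := fun x (_ : ∀ k, ‖x k‖ ≤ 1) =>
    (‖∑ k ∈ F, T k (x k)‖₊ : ℝ≥0∞)) x hx le_rfl

theorem nnnorm_le_gn {E : Set ℕ} {k : ℕ} (hk : k ∈ E) {x : X} (hx : ‖x‖ ≤ 1) :
    (‖T k x‖₊ : ℝ≥0∞) ≤ gn T E := by
  simpa using le_gn T (F := {k}) (by simpa using hk) (x := fun _ => x) fun _ => hx

theorem nnnorm_sum_Ico_le_gn (a b : ℕ) {x : ℕ → X} (hx : ∀ k, ‖x k‖ ≤ 1) :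
    (‖∑ k ∈ Ico a b, T k (x k)‖₊ : ℝ≥0∞) ≤ gn T {j | a ≤ j} :=
  le_gn T (fun _ hk => (mem_Ico.1 hk).1) hx

theorem gn_mono {E E' : Set ℕ} (h : E ⊆ E') : gn T E ≤ gn T E' :=
  iSup₂_le fun _ hF => iSup₂_le fun _ hx => le_gn T (hF.trans h) hx

theorem gn_union_le (E E' : Set ℕ) : gn T (E ∪ E') ≤ gn T E + gn T E' := by
  classical
  refine iSup₂_le fun F hF => iSup₂_le fun x hx => ?_
  rw [← sum_filter_add_sum_filter_not F (· ∈ E)]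
  refine (ENNReal.coe_le_coe.2 (nnnorm_add_le _ _)).trans ?_
  push_cast
  refine add_le_add (le_gn T (fun k hk => (mem_filter.1 hk).2) hx)
    (le_gn T (fun k hk => ?_) hx)
  obtain ⟨hkF, hkE⟩ := mem_filter.1 hk
  exact (hF hkF).resolve_left hkE

theorem gn_le_sum {E : Set ℕ} {s : Finset ℕ} (hE : E ⊆ s) {c : ℕ → ℝ≥0∞}
    (hc : ∀ k ∈ E, ∀ x : X, ‖x‖ ≤ 1 → (‖T k x‖₊ : ℝ≥0∞) ≤ c k) :
    gn T E ≤ ∑ k ∈ s, c k := by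
  refine iSup₂_le fun F hF => iSup₂_le fun x hx => ?_
  calc (‖∑ k ∈ F, T k (x k)‖₊ : ℝ≥0∞) ≤ ∑ k ∈ F, (‖T k (x k)‖₊ : ℝ≥0∞) := by
        exact_mod_cast nnnorm_sum_le _ _
    _ ≤ ∑ k ∈ F, c k := sum_le_sum fun k hk => hc k (hF hk) (x k) (hx k)
    _ ≤ ∑ k ∈ s, c k := sum_le_sum_of_subset (by exact_mod_cast hF.trans hE)

theorem exists_lt_nnnorm_sum_of_lt_gn {E : Set ℕ} {r : ℝ≥0∞} (h : r < gn T E) :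
    ∃ F : Finset ℕ, (F : Set ℕ) ⊆ E ∧ ∃ x : ℕ → X, (∀ k, ‖x k‖ ≤ 1) ∧
      r < ‖∑ k ∈ F, T k (x k)‖₊ := by
  simpa only [gn, lt_iSup_iff, exists_prop] using h

theorem cauchySeq_sum_range_of_tendsto_gn
    (hT : Tendsto (fun K => gn T {j | K ≤ j}) atTop (𝓝 0)) {x : ℕ → X} (hx : ∀ k, ‖x k‖ ≤ 1) :
    CauchySeq fun m => ∑ k ∈ range m, T k (x k) := by
  refine Metric.cauchySeq_iff'.2 fun ε hε => ?_
  obtain ⟨N, hN⟩ := eventually_atTop.1 (hT.eventually_lt_const (ENNReal.ofReal_pos.2 hε))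
  refine ⟨N, fun m hm => ?_⟩
  have := (nnnorm_sum_Ico_le_gn T N m hx).trans_lt (hN N le_rfl)
  rwa [← enorm_eq_nnnorm, ← ofReal_norm, ENNReal.ofReal_lt_ofReal_iff hε, sum_Ico_eq_sub _ hm,
    ← dist_eq_norm] at this

theorem nnnorm_sub_sum_range_le_gn {x : ℕ → X} (hx : ∀ k, ‖x k‖ ≤ 1) {y : Y}
    (hy : Tendsto (fun m => ∑ k ∈ range m, T k (x k)) atTop (𝓝 y)) (K : ℕ) :
    (‖y - ∑ k ∈ range K, T k (x k)‖₊ : ℝ≥0∞) ≤ gn T {j | K ≤ j} := by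
  refine le_of_tendsto (ENNReal.tendsto_coe.2 (hy.sub_const _).nnnorm)
    ((eventually_ge_atTop K).mono fun m hm => ?_)
  rw [← sum_Ico_eq_sub _ hm]
  exact nnnorm_sum_Ico_le_gn T K m hx

end GroupNorm

section Sphere

variable {X Y : Type*} [NormedAddCommGroup X] [NormedSpace ℝ X] [Nontrivial X]
  [NormedAddCommGroup Y] [NormedSpace ℝ Y] (T : ℕ → X →ₗ[ℝ] Y)

theorem exists_sphere_norm_sum_ge (F : Finset ℕ) {x : ℕ → X} (hx : ∀ k, ‖x k‖ ≤ 1) :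
    ∃ u : ℕ → sphere (0 : X) 1, ‖∑ k ∈ F, T k (x k)‖ ≤ ‖∑ k ∈ F, T k (u k)‖ := by
  let S : (F → X) →ₗ[ℝ] Y := ∑ k : F, (T k).comp (LinearMap.proj k)
  have hS (w : F → X) : S w = ∑ k : F, T k (w k) := by simp [S]
  have hmem : (fun k : F => x k) ∈ convexHull ℝ (Set.univ.pi fun _ => sphere (0 : X) 1) := by
    rw [convexHull_pi, convexHull_sphere_eq_closedBall _ zero_le_one]
    exact fun k _ => mem_closedBall_zero_iff.2 (hx k)
  obtain ⟨w, hw, hle⟩ := (convexOn_univ_norm.comp_linearMap S).exists_ge_of_mem_convexHull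
    (Set.subset_univ _) hmem
  obtain ⟨e⟩ := (NormedSpace.sphere_nonempty.2 zero_le_one : (sphere (0 : X) 1).Nonempty).to_subtype
  refine ⟨fun k => if hk : k ∈ F then ⟨w ⟨k, hk⟩, hw _ (Set.mem_univ _)⟩ else e, ?_⟩
  simpa [hS, ← sum_coe_sort F] using hle

theorem exists_sphere_lt_nnnorm_sum_Ico {K : ℕ} {r : ℝ≥0∞}
    (h : r < gn (fun j x => T j x) {j | K ≤ j}) (N : ℕ) :
    ∃ K' ≥ N, ∃ u : ℕ → sphere (0 : X) 1, r < ‖∑ k ∈ Ico K K', T k (u k)‖₊ := by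
  obtain ⟨F, hFK, x, hx, hr⟩ := exists_lt_nnnorm_sum_of_lt_gn _ h
  let K' := max N (F.sup id + 1)
  have hF : F ⊆ Ico K K' := fun k hk =>
    mem_Ico.2 ⟨hFK hk, (Nat.lt_succ_of_le (le_sup (f := id) hk)).trans_le (le_max_right _ _)⟩
  let x' : ℕ → X := fun k => if k ∈ F then x k else 0
  have hx' (k : ℕ) : ‖x' k‖ ≤ 1 := by
    by_cases hk : k ∈ F <;> simp [x', hk, hx k]
  have hsum : ∑ k ∈ Ico K K', T k (x' k) = ∑ k ∈ F, T k (x k) := by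
    simp only [x', apply_ite (T _), map_zero, sum_ite_mem, inter_eq_right.2 hF]
  obtain ⟨u, hu⟩ := exists_sphere_norm_sum_ge T (Ico K K') hx'
  refine ⟨K', le_max_left _ _, u, hr.trans_le ?_⟩
  rw [← hsum]
  exact_mod_cast hu

end Sphere

section FilterLemmas

variable {ι : Type*} {L : Filter ι} [L.IsCountablyGenerated]

theorem Filter.exists_seq_step_of_frequently {σ : Type*} {P : ℕ → σ → σ → ι → Prop}
    (h : ∀ i a, ∃ᶠ n in L, ∃ b, P i a b n) (a₀ : σ) :
    ∃ (a : ℕ → σ) (φ : ℕ → ι), a 0 = a₀ ∧ Tendsto φ atTop L ∧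
      ∀ i, P i (a i) (a (i + 1)) (φ i) := by
  obtain ⟨s, hs⟩ := L.exists_antitone_basis
  choose next hnext hmem using fun i a => ((h i a).and_eventually (hs.mem i)).exists
  choose b hb using hnext
  let a : ℕ → σ := fun i => Nat.rec a₀ (fun i a => b i a) i
  exact ⟨a, fun i => next i (a i), rfl, hs.tendsto fun i => hmem i (a i), fun i => hb i (a i)⟩

theorem Filter.exists_seq_tendsto_of_forall_frequently {p : ℕ → ι → Prop}
    (h : ∀ i, ∃ᶠ n in L, p i n) : ∃ φ : ℕ → ι, Tendsto φ atTop L ∧ ∀ i, p i (φ i) := by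
  obtain ⟨-, φ, -, hφ, hp⟩ := exists_seq_step_of_frequently (P := fun i (_ _ : Unit) n => p i n)
    (fun i _ => (h i).mono fun _ hn => ⟨(), hn⟩) ()
  exact ⟨φ, hφ, hp⟩

theorem exists_eventually_opNorm_le_of_tendsto_zero {𝕜 E F : Type*} [NontriviallyNormedField 𝕜]
    [NormedAddCommGroup E] [NormedSpace 𝕜 E] [CompleteSpace E]
    [NormedAddCommGroup F] [NormedSpace 𝕜 F] {B : ι → E →L[𝕜] F}
    (h : ∀ x, Tendsto (fun n => B n x) L (𝓝 0)) : ∃ C, ∀ᶠ n in L, ‖B n‖ ≤ C := by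
  by_contra! hB
  obtain ⟨φ, hφ, hlarge⟩ := exists_seq_tendsto_of_forall_frequently fun i : ℕ => hB i
  obtain ⟨C, hC⟩ := banach_steinhaus fun x =>
    ((isBounded_range_of_tendsto _ ((h x).comp hφ)).exists_norm_le).imp
      fun _ hC i => hC _ ⟨i, rfl⟩
  obtain ⟨i, hi⟩ := exists_nat_gt C
  exact (hlarge i).not_ge ((hC i).trans hi.le)

end FilterLemmas

theorem compl_mem_iInf_principal_compl {ι α : Type*} {Q : ι → Set α} {S : Set α} :
    Sᶜ ∈ ⨅ j, 𝓟 (Q j)ᶜ ↔ ∃ F : Finset ι, S ⊆ ⋃ j ∈ F, Q j := by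
  simp only [mem_iInf_finite, iInf_principal_finset, mem_principal, ← Set.compl_iUnion₂,
    Set.compl_subset_compl]

theorem jlimsup_eq_top_iff_frequently {J : Set (Set ℕ)} {L : Filter ℕ}
    (hJ : ∀ S, S ∈ J ↔ Sᶜ ∈ L) {y : ℕ → ℝ≥0∞} :
    jlimsup J y = ⊤ ↔ ∀ r ≠ ⊤, ∃ᶠ n in L, r ≤ y n := by
  simp only [jlimsup, sInf_eq_top, Set.mem_ofPred_eq, hJ, Filter.Frequently, Filter.Eventually,
    Set.compl_ofPred]
  exact forall_congr' fun r => not_imp_not.symm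

theorem exists_forall_lt_eq_of_strictMono {α : Type*} {K : ℕ → ℕ} (hK : StrictMono K)
    {v : ℕ → ℕ → α} (hv : ∀ i, ∀ k < K i, v (i + 1) k = v i k) :
    ∃ x : ℕ → α, ∀ i, ∀ k < K i, x k = v i k := by
  have hcoh {i j : ℕ} (hij : i ≤ j) : ∀ k < K i, v j k = v i k := by
    induction hij with
    | refl => exact fun _ _ => rfl
    | step hij ih => exact fun k hk => (hv _ k (hk.trans_le (hK.monotone hij))).trans (ih k hk)
  refine ⟨fun k => v (k + 1) k, fun i k hk => ?_⟩
  rcases le_total i (k + 1) with h | h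
  · exact hcoh h k hk
  · exact (hcoh h k ((Nat.lt_succ_self k).trans_le (hK.id_le (k + 1)))).symm

section GlidingHump

variable {ι X Y : Type*} {L : Filter ι}
  [NormedAddCommGroup X] [NormedSpace ℝ X] [NormedAddCommGroup Y] [NormedSpace ℝ Y]
  {A : ι → ℕ → X →ₗ[ℝ] Y}

theorem exists_eventually_norm_le_of_gn_lt_top [L.IsCountablyGenerated] [CompleteSpace X]
    {f : ι → ℕ} (hf : ∀ n, gn (fun j x => A n j x) {j | f n ≤ j} < ⊤) {k : ℕ}
    (hcol : ∀ x, Tendsto (fun n => A n k x) L (𝓝 0)) :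
    ∃ C : ℝ, ∀ᶠ n in L, f n ≤ k → ∀ x : X, ‖x‖ ≤ 1 → ‖A n k x‖ ≤ C := by
  have hbdd {n : ι} (hn : f n ≤ k) : ∃ C, ∀ x, ‖A n k x‖ ≤ C * ‖x‖ :=
    LinearMap.bound_of_ball_bound one_pos _ (A n k) fun x hx => by
      have := nnnorm_le_gn (fun j x => A n j x) (Set.mem_ofPred.2 hn) (mem_ball_zero_iff.1 hx).le
      simpa using ENNReal.toReal_mono (hf n).ne this
  let B : ι → X →L[ℝ] Y := fun n =>
    if hn : f n ≤ k then (A n k).mkContinuousOfExistsBound (hbdd hn) else 0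
  have hB {n : ι} (hn : f n ≤ k) (x : X) : B n x = A n k x := by simp [B, hn]
  have hBA (n : ι) (x : X) : ‖B n x‖ ≤ ‖A n k x‖ := by
    by_cases hn : f n ≤ k <;> simp [B, hn]
  obtain ⟨C, hC⟩ := exists_eventually_opNorm_le_of_tendsto_zero (B := B) fun x =>
    squeeze_zero_norm (hBA · x) (tendsto_zero_iff_norm_tendsto_zero.1 (hcol x))
  refine ⟨C, hC.mono fun n hn hfn x hx => ?_⟩
  rw [← hB hfn]
  exact ((B n).le_of_opNorm_le hn x).trans (mul_le_of_le_one_right ((norm_nonneg _).trans hn) hx)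

theorem frequently_le_gn_Ici [L.IsCountablyGenerated] [CompleteSpace X] {f : ι → ℕ}
    (hf : ∀ n, gn (fun j x => A n j x) {j | f n ≤ j} < ⊤)
    (hcol : ∀ k x, Tendsto (fun n => A n k x) L (𝓝 0))
    (hinf : ∀ r ≠ ⊤, ∃ᶠ n in L, r ≤ gn (fun j x => A n j x) {j | f n ≤ j}) (K : ℕ) :
    ∀ r ≠ ⊤, ∃ᶠ n in L, r ≤ gn (fun j x => A n j x) {j | K ≤ j} := by
  choose C hC using fun k => exists_eventually_norm_le_of_gn_lt_top hf (hcol k)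
  set c := ∑ k ∈ range K, ENNReal.ofReal (C k)
  have hc : c ≠ ⊤ := sum_ne_top.2 fun _ _ => ofReal_ne_top
  have hwindow : ∀ᶠ n in L, gn (fun j x => A n j x) {j | f n ≤ j ∧ j < K} ≤ c := by
    filter_upwards [(eventually_all_finset (range K)).2 fun k _ => hC k] with n hn
    refine gn_le_sum _ (fun j hj => mem_range.2 hj.2) fun k hk x hx => ?_
    rw [← enorm_eq_nnnorm, ← ofReal_norm]
    exact ENNReal.ofReal_le_ofReal (hn k (mem_range.2 hk.2) hk.1 x hx)
  intro r hr
  refine ((hinf (r + c) (add_ne_top.2 ⟨hr, hc⟩)).and_eventually hwindow).mono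
    fun n ⟨hlarge, hsmall⟩ => ?_
  have hsplit : gn (fun j x => A n j x) {j | f n ≤ j}
      ≤ gn (fun j x => A n j x) {j | f n ≤ j ∧ j < K} + gn (fun j x => A n j x) {j | K ≤ j} :=
    (gn_mono _ fun j hj => (lt_or_ge j K).imp (fun h => ⟨hj, h⟩) id).trans (gn_union_le _ _ _)
  have := hlarge.trans (hsplit.trans (add_le_add hsmall le_rfl))
  rwa [add_comm c, ENNReal.add_le_add_iff_right hc] at this

theorem frequently_exists_hump [Nontrivial X]
    (htail : ∀ n, Tendsto (fun K => gn (fun j x => A n j x) {j | K ≤ j}) atTop (𝓝 0))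
    (hcol : ∀ k x, Tendsto (fun n => A n k x) L (𝓝 0)) {K : ℕ}
    (hK : ∀ r ≠ ⊤, ∃ᶠ n in L, r ≤ gn (fun j x => A n j x) {j | K ≤ j})
    (v : ℕ → sphere (0 : X) 1) (C : ℝ) :
    ∃ᶠ n in L, ∃ K' > K, ∃ v' : ℕ → sphere (0 : X) 1, (∀ k < K, v' k = v k) ∧
      C < ‖∑ k ∈ range K', A n k (v' k)‖ ∧ gn (fun j x => A n j x) {j | K' ≤ j} ≤ 1 := by
  have hhead : ∀ᶠ n in L, ‖∑ k ∈ range K, A n k (v k)‖ < 1 := by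
    have := tendsto_finsetSum (range K) fun k _ => hcol k (v k)
    rw [sum_const_zero] at this
    exact NormedAddGroup.tendsto_nhds_zero.1 this 1 one_pos
  refine ((hK (ENNReal.ofReal (C + 1) + 1) (by finiteness)).and_eventually hhead).mono
    fun n ⟨hlarge, hhead⟩ => ?_
  obtain ⟨N, hN⟩ := eventually_atTop.1 ((htail n).eventually_lt_const one_pos)
  obtain ⟨K', hK', u, hu⟩ := exists_sphere_lt_nnnorm_sum_Ico (A n)
    ((ENNReal.lt_add_right ofReal_ne_top one_ne_zero).trans_le hlarge) (max N (K + 1))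
  have hKK' : K < K' := (le_max_right _ _).trans hK'
  refine ⟨K', hKK', fun k => if k < K then v k else u k, fun k hk => if_pos hk, ?_,
    (gn_mono _ fun j hj => ((le_max_left _ _).trans hK').trans hj).trans (hN N le_rfl).le⟩
  have hsplit : ∑ k ∈ range K', A n k ((if k < K then v k else u k : sphere (0 : X) 1))
      = ∑ k ∈ range K, A n k (v k) + ∑ k ∈ Ico K K', A n k (u k) := by
    rw [← sum_range_add_sum_Ico _ hKK'.le]
    congr 1 <;> refine sum_congr rfl fun k hk => ?_
    · rw [if_pos (mem_range.1 hk)]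
    · rw [if_neg (mem_Ico.1 hk).1.not_gt]
  rw [← enorm_eq_nnnorm, ← ofReal_norm, ENNReal.ofReal_lt_ofReal_iff'] at hu
  rw [hsplit, add_comm]
  linarith [norm_le_add_norm_add (∑ k ∈ Ico K K', A n k (u k)) (∑ k ∈ range K, A n k (v k)), hu.1]

theorem exists_sphere_seq_humps [L.IsCountablyGenerated] [Nontrivial X]
    (htail : ∀ n, Tendsto (fun K => gn (fun j x => A n j x) {j | K ≤ j}) atTop (𝓝 0))
    (hcol : ∀ k x, Tendsto (fun n => A n k x) L (𝓝 0))
    (hK : ∀ K, ∀ r ≠ ⊤, ∃ᶠ n in L, r ≤ gn (fun j x => A n j x) {j | K ≤ j}) :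
    ∃ (x : ℕ → sphere (0 : X) 1) (n : ℕ → ι) (K : ℕ → ℕ), Tendsto n atTop L ∧
      ∀ i : ℕ, (i : ℝ) + 1 < ‖∑ k ∈ range (K i), A (n i) k (x k)‖ ∧
        gn (fun j x => A (n i) j x) {j | K i ≤ j} ≤ 1 := by
  obtain ⟨e⟩ := (NormedSpace.sphere_nonempty.2 zero_le_one : (sphere (0 : X) 1).Nonempty).to_subtype
  -- A state `(K, v)` records a block end `K` and a sequence `v` whose values below `K` are final.
  obtain ⟨a, n, -, hn, hstep⟩ := exists_seq_step_of_frequently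
    (P := fun (i : ℕ) (a b : ℕ × (ℕ → sphere (0 : X) 1)) n => a.1 < b.1 ∧
      (∀ k < a.1, b.2 k = a.2 k) ∧ (i : ℝ) + 1 < ‖∑ k ∈ range b.1, A n k (b.2 k)‖ ∧
      gn (fun j x => A n j x) {j | b.1 ≤ j} ≤ 1)
    (fun i a => (frequently_exists_hump htail hcol (hK a.1) a.2 (i + 1)).mono
      fun _ ⟨K', hK', v', hv', hlarge, htail⟩ => ⟨(K', v'), hK', hv', hlarge, htail⟩)
    (0, fun _ => e)
  obtain ⟨x, hx⟩ := exists_forall_lt_eq_of_strictMono (v := fun i => (a i).2)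
    (strictMono_nat_of_lt_succ fun i => (hstep i).1) fun i => (hstep i).2.1
  refine ⟨x, n, fun i => (a (i + 1)).1, hn, fun i => ⟨?_, (hstep i).2.2.2⟩⟩
  convert (hstep i).2.2.1 using 4 with k hk
  rw [hx (i + 1) k (mem_range.1 hk)]

theorem exists_sphere_seq_frequently_le_nnnorm [L.IsCountablyGenerated] [CompleteSpace X]
    [CompleteSpace Y]
    (htail : ∀ n, Tendsto (fun K => gn (fun j x => A n j x) {j | K ≤ j}) atTop (𝓝 0))
    (hcol : ∀ k x, Tendsto (fun n => A n k x) L (𝓝 0)) {f : ι → ℕ}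
    (hf : ∀ n, gn (fun j x => A n j x) {j | f n ≤ j} < ⊤)
    (hinf : ∀ r ≠ ⊤, ∃ᶠ n in L, r ≤ gn (fun j x => A n j x) {j | f n ≤ j}) :
    ∃ x : ℕ → X, (∀ k, ‖x k‖ = 1) ∧ ∃ y : ι → Y,
      (∀ n, Tendsto (fun m => ∑ k ∈ range m, A n k (x k)) atTop (𝓝 (y n))) ∧
      ∀ r ≠ (⊤ : ℝ≥0∞), ∃ᶠ n in L, r ≤ ‖y n‖₊ := by
  have : Nontrivial X := by
    by_contra hX
    rw [not_nontrivial_iff_subsingleton] at hX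
    obtain ⟨n, hn⟩ := (hinf 1 one_ne_top).exists
    simp [gn, Subsingleton.elim _ (0 : X)] at hn
  obtain ⟨x, n, K, hn, hhump⟩ :=
    exists_sphere_seq_humps htail hcol (frequently_le_gn_Ici hf hcol hinf)
  have hx1 (k : ℕ) : ‖(x k : X)‖ = 1 := norm_eq_of_mem_sphere (x k)
  choose y hy using fun n => cauchySeq_tendsto_of_complete
    (cauchySeq_sum_range_of_tendsto_gn _ (htail n) fun k => (hx1 k).le)
  refine ⟨fun k => x k, hx1, y, hy, fun r hr => hn.frequently (Eventually.frequently ?_)⟩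
  have hlarge (i : ℕ) : (i : ℝ) ≤ ‖y (n i)‖ := by
    have hrest : ‖y (n i) - ∑ k ∈ range (K i), A (n i) k (x k)‖ ≤ 1 := by
      exact_mod_cast (nnnorm_sub_sum_range_le_gn _ (fun k => (hx1 k).le) (hy (n i)) _).trans
        (hhump i).2
    linarith [(hhump i).1, norm_le_insert (y (n i)) (∑ k ∈ range (K i), A (n i) k (x k))]
  filter_upwards [eventually_ge_atTop ⌈r.toReal⌉₊] with i hi
  rw [← ofReal_toReal hr, ← enorm_eq_nnnorm, ← ofReal_norm]
  exact ENNReal.ofReal_le_ofReal ((Nat.ceil_le.1 hi).trans (hlarge i))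

end GlidingHump

theorem stmt18_general {X Y : Type*} [NormedAddCommGroup X] [NormedSpace ℝ X] [CompleteSpace X]
    [NormedAddCommGroup Y] [NormedSpace ℝ Y] [CompleteSpace Y]
    (J : Set (Set ℕ))
    (hcg : ∃ Q : ℕ → Set ℕ, ∀ S : Set ℕ, S ∈ J ↔ ∃ F : Finset ℕ, S ⊆ ⋃ j ∈ F, Q j)
    (A : ℕ → ℕ → X →ₗ[ℝ] Y)
    (htail : ∀ n, Tendsto (fun k => gn (fun j x => A n j x) {j | k ≤ j}) atTop (nhds 0))
    (hcol : ∀ (k : ℕ) (x : X), ∀ ε : ℝ, 0 < ε → {n | ε ≤ ‖A n k x‖} ∈ J)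
    (f : ℕ → ℕ)
    (hf : ∀ n, gn (fun j x => A n j x) {j | f n ≤ j} < ⊤)
    (hinf : jlimsup J (fun n => gn (fun j x => A n j x) {j | f n ≤ j}) = ⊤) :
    ∃ x : ℕ → X, (∀ k, ‖x k‖ = 1) ∧
      ∃ y : ℕ → Y,
        (∀ n, Tendsto (fun m => ∑ k ∈ Finset.range m, A n k (x k)) atTop (nhds (y n))) ∧
        jlimsup J (fun n => (‖y n‖₊ : ℝ≥0∞)) = ⊤ := by
  obtain ⟨Q, hQ⟩ := hcg
  have hJ (S : Set ℕ) : S ∈ J ↔ Sᶜ ∈ ⨅ j, 𝓟 (Q j)ᶜ :=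
    (hQ S).trans compl_mem_iInf_principal_compl.symm
  have hcol' (k : ℕ) (x : X) : Tendsto (fun n => A n k x) (⨅ j, 𝓟 (Q j)ᶜ) (𝓝 0) :=
    NormedAddGroup.tendsto_nhds_zero.2 fun ε hε => by
      simpa [hJ, Set.compl_ofPred, Filter.Eventually] using hcol k x ε hε
  obtain ⟨x, hx, y, hy, hlarge⟩ := exists_sphere_seq_frequently_le_nnnorm htail hcol' hf
    ((jlimsup_eq_top_iff_frequently hJ).1 hinf)
  exact ⟨x, hx, y, hy, (jlimsup_eq_top_iff_frequently hJ).2 hlarge⟩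

/-- If `J` is countably generated, each row of `A` has vanishing tail group norms, every
column of `A` converges to `0` strongly along `J`, and the `J`-limsup of the finite tail
group norms `‖A_{n, ≥ f n}‖` is infinite, then there is a unit-sphere-valued sequence `x`
with `J`-limsup `‖A_n x‖ = ∞`. -/
theorem stmt18 {X Y : Type*} [NormedAddCommGroup X] [NormedSpace ℝ X] [CompleteSpace X]
    [NormedAddCommGroup Y] [NormedSpace ℝ Y] [CompleteSpace Y]
    (J : Set (Set ℕ))
    (hJ_sub : ∀ S S' : Set ℕ, S ∈ J → S' ⊆ S → S' ∈ J)
    (hJ_union : ∀ S S' : Set ℕ, S ∈ J → S' ∈ J → S ∪ S' ∈ J)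
    (hJ_fin : ∀ S : Set ℕ, S.Finite → S ∈ J)
    (hJ_proper : Set.univ ∉ J)
    (hcg : ∃ Q : ℕ → Set ℕ, ∀ S : Set ℕ, S ∈ J ↔ ∃ F : Finset ℕ, S ⊆ ⋃ j ∈ F, Q j)
    (A : ℕ → ℕ → X →ₗ[ℝ] Y)
    (htail : ∀ n, Tendsto (fun k => gn (fun j x => A n j x) {j | k ≤ j}) atTop (nhds 0))
    (hcol : ∀ (k : ℕ) (x : X), ∀ ε : ℝ, 0 < ε → {n | ε ≤ ‖A n k x‖} ∈ J)
    (f : ℕ → ℕ)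
    (hf : ∀ n, gn (fun j x => A n j x) {j | f n ≤ j} < ⊤)
    (hinf : jlimsup J (fun n => gn (fun j x => A n j x) {j | f n ≤ j}) = ⊤) :
    ∃ x : ℕ → X, (∀ k, ‖x k‖ = 1) ∧
      ∃ y : ℕ → Y,
        (∀ n, Tendsto (fun m => ∑ k ∈ Finset.range m, A n k (x k)) atTop (nhds (y n))) ∧
        jlimsup J (fun n => (‖y n‖₊ : ℝ≥0∞)) = ⊤ :=
  stmt18_general J hcg A htail hcol f hf hinf
end
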